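/- arXiv:1410.5249 — 8 statements merged into one kernel-verified Lean document; each statement's English description precedes it below -/
import Mathlib

section
/- Let A be a commutative ring, I an ideal of A, and S a truncation set. Then: (1) X_S(A) is a closed subring of A^S and X_S(I) is a closed ideal of X_S(A); (2) for every m ∈ S the Frobenius and Verschiebung restrict, i.e. F_m(X_S(A)) ⊆ X_{S/m}(A), V_m(X_{S/m}(A)) ⊆ X_S(A), F_m(X_S(I)) ⊆ X_{S/m}(I) and V_m(X_{S/m}(I)) ⊆ X_S(I). -/
/-- `S/n = {ν : νn ∈ S}`. -/
def truncDiv (S : Set ℕ) (n : ℕ) : Set ℕ := {ν | ν * n ∈ S}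

/-- A truncation set: a nonempty set of positive integers closed under
taking positive divisors. -/
def IsTruncationSet (S : Set ℕ) : Prop :=
  S.Nonempty ∧ (∀ n ∈ S, 0 < n) ∧ ∀ n ∈ S, ∀ d : ℕ, d ∣ n → 0 < d → d ∈ S

/-- Frobenius `F_n : A^S → A^{S/n}`, `F_n(a)_ν = a_{νn}`. -/
def Frob {A : Type*} [CommRing A] (S : Set ℕ) (n : ℕ) (a : S → A) :
    truncDiv S n → A :=
  fun ν => a ⟨ν.1 * n, ν.2⟩

/-- Verschiebung `V_n : A^{S/n} → A^S`, `V_n(a)_μ = n·a_{μ/n}` if `n ∣ μ`,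
else `0`. -/
def Versch {A : Type*} [CommRing A] (S : Set ℕ) (n : ℕ)
    (a : truncDiv S n → A) : S → A :=
  fun μ =>
    if h : n ∣ μ.1 then
      (n : A) * a ⟨μ.1 / n, show μ.1 / n * n ∈ S by
        rw [Nat.div_mul_cancel h]; exact μ.2⟩
    else 0

/-- The product topology on `A^S`, `A` discrete. -/
def prodTop (S : Set ℕ) (A : Type*) : TopologicalSpace (S → A) :=
  @Pi.topologicalSpace S (fun _ => A) fun _ => ⊥

/-- `X_S(J)`: the topological closure of the additive subgroup of `A^S`
generated by the elements `V_n⟨a⟩`, `n ∈ S`, `a ∈ J`, where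
`V_n⟨a⟩ = V_n((a^ν)_{ν ∈ S/n})`. -/
def XS (S : Set ℕ) {A : Type*} [CommRing A] (J : Set A) : Set (S → A) :=
  @closure _ (prodTop S A)
    (AddSubgroup.closure
      {x | ∃ n ∈ S, ∃ a ∈ J, x = Versch S n fun ν => a ^ ν.1} : Set (S → A))


/-!
Each operation sends a generator `V_n⟨a⟩` to a multiple of a generator of the same kind: with
`d = gcd(n, m)`, `n = n'd`, `m = m'd`,
* `V_n⟨a⟩ · V_m⟨b⟩ = d · V_{n'm'd}⟨a^{m'} b^{n'}⟩`,
* `F_m V_n⟨a⟩ = d · V_{n'}⟨a^{m'}⟩`,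
* `V_m V_n⟨a⟩ = V_{nm}⟨a⟩`,

and `V_k⟨c⟩ = 0` on `S` when `k ∉ S`, so the index never leaves the truncation set. Since `a^{m'}`
and `a^{m'} b^{n'}` lie in `I` as soon as `a` resp. `b` does, the additive subgroup generated by the
`V_n⟨a⟩` is stable; the operations are (bi-)additive and continuous, so this passes to the closure.
-/

namespace AddSubgroup

variable {G H : Type*} [AddGroup G] [AddGroup H]

theorem map_mem_closure_of_forall (f : G →+ H) {s : Set G} {t : Set H}
    (h : ∀ x ∈ s, f x ∈ closure t) {x : G} (hx : x ∈ closure s) : f x ∈ closure t :=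
  (closure_le ((closure t).comap f)).2 h hx

theorem mul_mem_closure_of_forall {R : Type*} [NonUnitalNonAssocRing R] {s t u : Set R}
    (h : ∀ a ∈ s, ∀ b ∈ t, a * b ∈ closure u) {x y : R} (hx : x ∈ closure s)
    (hy : y ∈ closure t) : x * y ∈ closure u :=
  map_mem_closure_of_forall (AddMonoidHom.mulRight y)
    (fun a ha => map_mem_closure_of_forall (AddMonoidHom.mulLeft a) (h a ha) hy) hx

end AddSubgroup

theorem IsTruncationSet.truncDiv {S : Set ℕ} (hS : IsTruncationSet S) {m : ℕ} (hm : m ∈ S) :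
    IsTruncationSet (truncDiv S m) := by
  refine ⟨⟨1, show 1 * m ∈ S by rwa [one_mul]⟩,
    fun ν hν => Nat.pos_of_mul_pos_right (hS.2.1 _ hν), fun ν hν d hdν hd => ?_⟩
  exact hS.2.2 _ hν (d * m) (Nat.mul_dvd_mul_right hdν m) (Nat.mul_pos hd (hS.2.1 m hm))

section

variable {A : Type*} [CommRing A] {S : Set ℕ}

namespace Frob

variable (S) in
def addMonoidHom (m : ℕ) : (S → A) →+ (truncDiv S m → A) where
  toFun := Frob S m
  map_zero' := rfl
  map_add' _ _ := rfl

theorem continuous [TopologicalSpace A] (m : ℕ) : Continuous (Frob (A := A) S m) :=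
  continuous_pi fun _ => continuous_apply _

end Frob

namespace Versch

variable (S) in
def addMonoidHom (n : ℕ) : (truncDiv S n → A) →+ (S → A) where
  toFun := Versch S n
  map_zero' := by
    funext μ
    simp only [Versch, Pi.zero_apply, mul_zero, dite_eq_ite, ite_self]
  map_add' x y := by
    funext μ
    simp only [Versch, Pi.add_apply]
    split_ifs <;> ring

theorem continuous [TopologicalSpace A] [ContinuousMul A] (n : ℕ) :
    Continuous (Versch (A := A) S n) := by
  refine continuous_pi fun μ => ?_
  unfold Versch
  split
  · exact continuous_const.mul (continuous_apply _)
  · exact continuous_const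

theorem eq_zero_of_not_mem (hS : IsTruncationSet S) {n : ℕ} (hn : n ∉ S)
    (c : truncDiv S n → A) : Versch S n c = 0 := by
  funext μ
  refine dif_neg fun h => hn (hS.2.2 μ μ.2 n h ?_)
  exact Nat.pos_of_dvd_of_pos h (hS.2.1 μ μ.2)

end Versch

variable (S) in
/-- The element `V_n⟨a⟩ = V_n((a^ν)_ν)` of `A^S`. -/
def verschTeich (n : ℕ) (a : A) : S → A := Versch S n fun ν => a ^ ν.1

variable (S) in
/-- The additive subgroup whose closure is `X_S(J)`. -/
def xsGroup (J : Set A) : AddSubgroup (S → A) :=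
  AddSubgroup.closure {x | ∃ n ∈ S, ∃ a ∈ J, x = verschTeich S n a}

theorem verschTeich_apply (n : ℕ) (a : A) (μ : S) :
    verschTeich S n a μ = if n ∣ μ.1 then (n : A) * a ^ (μ.1 / n) else 0 := by
  unfold verschTeich Versch
  split_ifs <;> rfl

theorem one_eq_verschTeich : (1 : S → A) = verschTeich S 1 1 := by
  funext μ
  simp [verschTeich_apply]

theorem verschTeich_mul_verschTeich {n m d : ℕ} (hnm : n.Coprime m) (hn : 0 < n * d)
    (hm : 0 < m * d) (a b : A) :
    verschTeich S (n * d) a * verschTeich S (m * d) b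
      = d • verschTeich S (n * m * d) (a ^ m * b ^ n) := by
  funext μ
  simp only [Pi.mul_apply, Pi.smul_apply, verschTeich_apply, nsmul_eq_mul]
  by_cases hμ : n * m * d ∣ μ.1
  · obtain ⟨k, hk⟩ := hμ
    have hn' : n * d ∣ μ.1 := ⟨m * k, by rw [hk]; ring⟩
    have hm' : m * d ∣ μ.1 := ⟨n * k, by rw [hk]; ring⟩
    have hμn : μ.1 / (n * d) = m * k := by
      rw [hk, show n * m * d * k = n * d * (m * k) by ring, Nat.mul_div_cancel_left _ hn]
    have hμm : μ.1 / (m * d) = n * k := by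
      rw [hk, show n * m * d * k = m * d * (n * k) by ring, Nat.mul_div_cancel_left _ hm]
    have hnmd : 0 < n * m * d := by
      rw [mul_right_comm]
      exact Nat.mul_pos hn (Nat.pos_of_mul_pos_right hm)
    have hμnm : μ.1 / (n * m * d) = k := by rw [hk, Nat.mul_div_cancel_left _ hnmd]
    rw [if_pos hn', if_pos hm', if_pos ⟨k, hk⟩, hμn, hμm, hμnm]
    push_cast
    ring
  · have hlcm : Nat.lcm (n * d) (m * d) = n * m * d := by
      rw [Nat.lcm_mul_right, hnm.lcm_eq_mul]
    rw [if_neg hμ, mul_zero]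
    split_ifs with hn' hm'
    · exact absurd (hlcm ▸ Nat.lcm_dvd hn' hm') hμ
    all_goals simp

theorem frob_verschTeich {n m d : ℕ} (hnm : n.Coprime m) (hn : 0 < n * d) (a : A) :
    Frob S (m * d) (verschTeich S (n * d) a)
      = d • verschTeich (truncDiv S (m * d)) n (a ^ m) := by
  have hd : 0 < d := Nat.pos_of_mul_pos_left hn
  funext ν
  simp only [Frob, Pi.smul_apply, verschTeich_apply, nsmul_eq_mul]
  have hdvd : n * d ∣ ν.1 * (m * d) ↔ n ∣ ν.1 := by
    rw [← mul_assoc, Nat.mul_dvd_mul_iff_right hd, hnm.dvd_mul_right]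
  by_cases hν : n ∣ ν.1
  · obtain ⟨k, hk⟩ := hν
    have hexp : ν.1 * (m * d) / (n * d) = m * k := by
      rw [hk, show n * k * (m * d) = n * d * (m * k) by ring, Nat.mul_div_cancel_left _ hn]
    rw [if_pos (hdvd.2 ⟨k, hk⟩), if_pos ⟨k, hk⟩, hexp, hk,
      Nat.mul_div_cancel_left _ (Nat.pos_of_mul_pos_right hn)]
    push_cast
    ring
  · rw [if_neg (mt hdvd.1 hν), if_neg hν, mul_zero]

theorem versch_verschTeich (n m : ℕ) (a : A) :
    Versch S m (verschTeich (truncDiv S m) n a) = verschTeich S (n * m) a := by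
  funext μ
  rw [verschTeich_apply]
  unfold Versch
  by_cases hm : m ∣ μ.1
  · rw [dif_pos hm, verschTeich_apply]
    have hdvd : n ∣ μ.1 / m ↔ n * m ∣ μ.1 := by rw [Nat.dvd_div_iff_mul_dvd hm, mul_comm]
    by_cases hnm : n * m ∣ μ.1
    · simp only [if_pos (hdvd.2 hnm), if_pos hnm, Nat.div_div_eq_div_mul, mul_comm m n]
      push_cast
      ring
    · simp only [if_neg (mt hdvd.1 hnm), if_neg hnm, mul_zero]
  · rw [dif_neg hm, if_neg fun h => hm (Dvd.dvd.trans (dvd_mul_left m n) h)]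

theorem verschTeich_mem_xsGroup (hS : IsTruncationSet S) {J : Set A} (n : ℕ) {a : A}
    (ha : a ∈ J) : verschTeich S n a ∈ xsGroup S J := by
  by_cases hn : n ∈ S
  · exact AddSubgroup.subset_closure ⟨n, hn, a, ha, rfl⟩
  · rw [verschTeich, Versch.eq_zero_of_not_mem hS hn]
    exact zero_mem _

theorem xsGroup_mono {J K : Set A} (h : J ⊆ K) : xsGroup S J ≤ xsGroup S K :=
  AddSubgroup.closure_mono fun _ ⟨n, hn, a, ha, hx⟩ => ⟨n, hn, a, h ha, hx⟩

theorem mul_mem_xsGroup (hS : IsTruncationSet S) {I : Ideal A} {x y : S → A}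
    (hx : x ∈ xsGroup S ((⊤ : Ideal A) : Set A)) (hy : y ∈ xsGroup S (I : Set A)) :
    x * y ∈ xsGroup S (I : Set A) := by
  refine AddSubgroup.mul_mem_closure_of_forall ?_ hx hy
  rintro _ ⟨n, hn, a, -, rfl⟩ _ ⟨m, hm, b, hb, rfl⟩
  obtain ⟨d, n', m', -, hnm, rfl, rfl⟩ :=
    Nat.exists_coprime' (Nat.gcd_pos_of_pos_left m (hS.2.1 n hn))
  rw [verschTeich_mul_verschTeich hnm (hS.2.1 _ hn) (hS.2.1 _ hm)]
  have hb' : a ^ m' * b ^ n' ∈ I :=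
    I.mul_mem_left _ (I.pow_mem_of_mem hb _ (Nat.pos_of_mul_pos_right (hS.2.1 _ hn)))
  exact AddSubgroup.nsmul_mem _ (verschTeich_mem_xsGroup hS _ hb') _

theorem frob_mem_xsGroup (hS : IsTruncationSet S) {I : Ideal A} {m : ℕ} (hm : m ∈ S)
    {x : S → A} (hx : x ∈ xsGroup S (I : Set A)) :
    Frob S m x ∈ xsGroup (truncDiv S m) (I : Set A) := by
  refine AddSubgroup.map_mem_closure_of_forall (Frob.addMonoidHom S m) ?_ hx
  rintro _ ⟨n, hn, a, ha, rfl⟩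
  obtain ⟨d, n', m', -, hnm, rfl, rfl⟩ :=
    Nat.exists_coprime' (Nat.gcd_pos_of_pos_left m (hS.2.1 n hn))
  have ha' : a ^ m' ∈ I := I.pow_mem_of_mem ha _ (Nat.pos_of_mul_pos_right (hS.2.1 _ hm))
  change Frob S (m' * d) (verschTeich S (n' * d) a) ∈ xsGroup _ (I : Set A)
  rw [frob_verschTeich hnm (hS.2.1 _ hn)]
  exact AddSubgroup.nsmul_mem _ (verschTeich_mem_xsGroup (hS.truncDiv hm) _ ha') _

theorem versch_mem_xsGroup {J : Set A} {m : ℕ} {x : truncDiv S m → A}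
    (hx : x ∈ xsGroup (truncDiv S m) J) : Versch S m x ∈ xsGroup S J := by
  refine AddSubgroup.map_mem_closure_of_forall (Versch.addMonoidHom S m) ?_ hx
  rintro _ ⟨n, hn, a, ha, rfl⟩
  exact AddSubgroup.subset_closure ⟨n * m, hn, a, ha, versch_verschTeich n m a⟩

section Topology

variable [TopologicalSpace A]

theorem mul_mem_closure_xsGroup [ContinuousMul A] (hS : IsTruncationSet S) {I : Ideal A}
    {x y : S → A} (hx : x ∈ closure (xsGroup S ((⊤ : Ideal A) : Set A) : Set (S → A)))
    (hy : y ∈ closure (xsGroup S (I : Set A) : Set (S → A))) :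
    x * y ∈ closure (xsGroup S (I : Set A) : Set (S → A)) :=
  map_mem_closure₂ continuous_mul hx hy fun _ ha _ hb => mul_mem_xsGroup hS ha hb

theorem frob_mem_closure_xsGroup (hS : IsTruncationSet S) {I : Ideal A} {m : ℕ} (hm : m ∈ S)
    {x : S → A} (hx : x ∈ closure (xsGroup S (I : Set A) : Set (S → A))) :
    Frob S m x ∈ closure (xsGroup (truncDiv S m) (I : Set A) : Set (truncDiv S m → A)) :=
  map_mem_closure (Frob.continuous m) hx fun _ h => frob_mem_xsGroup hS hm h

theorem versch_mem_closure_xsGroup [ContinuousMul A] {J : Set A} {m : ℕ} {x : truncDiv S m → A}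
    (hx : x ∈ closure (xsGroup (truncDiv S m) J : Set (truncDiv S m → A))) :
    Versch S m x ∈ closure (xsGroup S J : Set (S → A)) :=
  map_mem_closure (Versch.continuous m) hx fun _ h => versch_mem_xsGroup h

end Topology

end

/-- For a commutative ring `A`, an ideal `I ⊆ A` and a truncation set `S`:
`X_S(A)` is a closed subring of `A^S`, `X_S(I)` is a closed ideal of `X_S(A)`,
and the Frobenius and Verschiebung maps restrict to `X_S(A)` and `X_S(I)`. -/
theorem statement1 {A : Type*} [CommRing A] (S : Set ℕ)
    (hS : IsTruncationSet S) (I : Ideal A) :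
    -- X_S(A) is a closed subring of A^S
    @IsClosed _ (prodTop S A) (XS S (Set.univ : Set A)) ∧
    (1 ∈ XS S (Set.univ : Set A)) ∧
    (∀ x y, x ∈ XS S (Set.univ : Set A) → y ∈ XS S (Set.univ : Set A) →
      x + y ∈ XS S (Set.univ : Set A)) ∧
    (∀ x, x ∈ XS S (Set.univ : Set A) → -x ∈ XS S (Set.univ : Set A)) ∧
    (∀ x y, x ∈ XS S (Set.univ : Set A) → y ∈ XS S (Set.univ : Set A) →
      x * y ∈ XS S (Set.univ : Set A)) ∧
    -- X_S(I) is a closed ideal in X_S(A)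
    @IsClosed _ (prodTop S A) (XS S (I : Set A)) ∧
    XS S (I : Set A) ⊆ XS S (Set.univ : Set A) ∧
    (∀ x y, x ∈ XS S (I : Set A) → y ∈ XS S (I : Set A) →
      x + y ∈ XS S (I : Set A)) ∧
    (∀ x, x ∈ XS S (I : Set A) → -x ∈ XS S (I : Set A)) ∧
    (∀ x y, x ∈ XS S (Set.univ : Set A) → y ∈ XS S (I : Set A) →
      x * y ∈ XS S (I : Set A)) ∧
    -- Frobenius and Verschiebung restrict
    (∀ m ∈ S, ∀ x ∈ XS S (Set.univ : Set A),
      Frob S m x ∈ XS (truncDiv S m) (Set.univ : Set A)) ∧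
    (∀ m ∈ S, ∀ x ∈ XS (truncDiv S m) (Set.univ : Set A),
      Versch S m x ∈ XS S (Set.univ : Set A)) ∧
    (∀ m ∈ S, ∀ x ∈ XS S (I : Set A),
      Frob S m x ∈ XS (truncDiv S m) (I : Set A)) ∧
    (∀ m ∈ S, ∀ x ∈ XS (truncDiv S m) (I : Set A),
      Versch S m x ∈ XS S (I : Set A)) := by
  let : TopologicalSpace A := ⊥
  have : DiscreteTopology A := ⟨rfl⟩
  rw [← (Submodule.top_coe : ((⊤ : Ideal A) : Set A) = Set.univ)]
  refine ⟨isClosed_closure, ?_,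
    fun _ _ => (xsGroup S ((⊤ : Ideal A) : Set A)).topologicalClosure.add_mem,
    fun _ => (xsGroup S ((⊤ : Ideal A) : Set A)).topologicalClosure.neg_mem,
    fun _ _ => mul_mem_closure_xsGroup hS,
    isClosed_closure, closure_mono (xsGroup_mono fun _ _ => Submodule.mem_top),
    fun _ _ => (xsGroup S (I : Set A)).topologicalClosure.add_mem,
    fun _ => (xsGroup S (I : Set A)).topologicalClosure.neg_mem,
    fun _ _ => mul_mem_closure_xsGroup hS,
    fun _ hm _ => frob_mem_closure_xsGroup hS hm, fun _ _ _ => versch_mem_closure_xsGroup,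
    fun _ hm _ => frob_mem_closure_xsGroup hS hm, fun _ _ _ => versch_mem_closure_xsGroup⟩
  rw [one_eq_verschTeich]
  exact subset_closure (verschTeich_mem_xsGroup hS 1 Submodule.mem_top)
end

section
/- Let S be a finite truncation set and let ℚ_S denote the localization of ℤ inverting all primes that lie in S. For every commutative ring A, the inclusion X_S(A) ⊆ A^S induces an isomorphism of ℚ_S-modules X_S(A) ⊗_ℤ ℚ_S ≅ A^S ⊗_ℤ ℚ_S. -/
/-- `X_S(J)` as an additive subgroup of `A^S`: the topological closure
(`A` discrete, `A^S` with the product topology) of the subgroup generated by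
the elements `V_n⟨a⟩`, `n ∈ S`, `a ∈ J`. -/
def XSgrp (S : Set ℕ) {A : Type*} [CommRing A] (J : Set A) :
    AddSubgroup (S → A) :=
  letI : TopologicalSpace A := ⊥
  haveI : DiscreteTopology A := ⟨rfl⟩
  (AddSubgroup.closure
    {x | ∃ n ∈ S, ∃ a ∈ J, x = Versch S n fun ν => a ^ ν.1}).topologicalClosure

/-- `ℚ_S`: the localization of `ℤ` inverting all primes lying in `S`. -/
abbrev QS (S : Set ℕ) : Type :=
  Localization (Submonoid.closure {x : ℤ | ∃ p ∈ S, Nat.Prime p ∧ x = (p : ℤ)})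

/-!
Since `S` is finite, `A^S` is discrete, so `X_S(A)` is the subgroup generated by the `V_n⟨a⟩`.
Tensoring with the flat `ℤ`-module `ℚ_S` keeps the inclusion injective, and it becomes
surjective as soon as every `x ∈ A^S` is multiplied into `X_S(A)` by a product of primes in `S`.
For `x = e_μ(a)` this follows by downward induction along divisibility in `S`: `V_μ⟨a⟩` equals
`μ • e_μ(a)` plus terms at proper multiples of `μ`, and `μ` is a product of primes in `S`.
-/

theorem LinearMap.rTensor_subtype_bijective_of_isLocalization {R L P : Type*} [CommRing R]
    [CommRing L] [Algebra R L] (M : Submonoid R) [IsLocalization M L] [AddCommGroup P]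
    [Module R P] (N : Submodule R P) (hN : ∀ x : P, ∃ s ∈ M, s • x ∈ N) :
    Function.Bijective (N.subtype.rTensor L) := by
  have : Module.Flat R L := IsLocalization.flat L M
  refine ⟨Module.Flat.rTensor_preserves_injective_linearMap _ N.injective_subtype, fun y => ?_⟩
  induction y using TensorProduct.induction_on with
  | zero => exact ⟨0, map_zero _⟩
  | add y z hy hz =>
    obtain ⟨y', rfl⟩ := hy
    obtain ⟨z', rfl⟩ := hz
    exact ⟨y' + z', map_add _ _ _⟩
  | tmul x q =>
    obtain ⟨s, hs, hsx⟩ := hN x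
    refine ⟨⟨s • x, hsx⟩ ⊗ₜ (IsLocalization.mk' L (1 : R) ⟨s, hs⟩ * q), ?_⟩
    rw [LinearMap.rTensor_tmul, Submodule.subtype_apply, TensorProduct.smul_tmul,
      Algebra.smul_def, ← mul_assoc, IsLocalization.mul_mk'_eq_mk'_of_mul, mul_one,
      IsLocalization.mk'_self, one_mul]

namespace AddSubgroup

variable {P : Type*} [AddCommGroup P] (M : Submonoid ℤ) (G : AddSubgroup P)

def saturation : AddSubgroup P where
  carrier := {x | ∃ s ∈ M, s • x ∈ G}
  zero_mem' := ⟨1, M.one_mem, by simp⟩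
  add_mem' := by
    rintro x y ⟨s, hs, hx⟩ ⟨t, ht, hy⟩
    refine ⟨t * s, M.mul_mem ht hs, ?_⟩
    rw [smul_add, mul_smul, mul_comm, mul_smul]
    exact G.add_mem (G.zsmul_mem hx t) (G.zsmul_mem hy s)
  neg_mem' := by
    rintro x ⟨s, hs, hx⟩
    exact ⟨s, hs, by rw [smul_neg]; exact G.neg_mem hx⟩

variable {M G}

theorem mem_saturation {x : P} : x ∈ G.saturation M ↔ ∃ s ∈ M, s • x ∈ G := Iff.rfl

theorem le_saturation : G ≤ G.saturation M :=
  fun x hx => ⟨1, M.one_mem, by rwa [one_smul]⟩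

theorem mem_saturation_of_smul_mem {s : ℤ} (hs : s ∈ M) {x : P}
    (hx : s • x ∈ G.saturation M) : x ∈ G.saturation M := by
  obtain ⟨t, ht, htx⟩ := hx
  exact ⟨t * s, M.mul_mem ht hs, by rwa [mul_smul]⟩

end AddSubgroup

abbrev primesSubmonoid (S : Set ℕ) : Submonoid ℤ :=
  Submonoid.closure {x : ℤ | ∃ p ∈ S, Nat.Prime p ∧ x = (p : ℤ)}

theorem natCast_mem_primesSubmonoid {S : Set ℕ} (hS : IsTruncationSet S) {μ : ℕ} (hμ : μ ∈ S) :
    (μ : ℤ) ∈ primesSubmonoid S := by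
  rw [← Nat.prod_primeFactorsList (hS.2.1 μ hμ).ne', Nat.cast_list_prod]
  refine Submonoid.list_prod_mem _ fun x hx => ?_
  obtain ⟨p, hp, rfl⟩ := List.mem_map.mp hx
  have hprime : p.Prime := Nat.prime_of_mem_primeFactorsList hp
  exact Submonoid.subset_closure
    ⟨p, hS.2.2 μ hμ p (Nat.dvd_of_mem_primeFactorsList hp) hprime.pos, hprime, rfl⟩

section Verschiebung

variable (S : Set ℕ) (A : Type*) [CommRing A]

abbrev verschSubgroup : AddSubgroup (S → A) :=
  AddSubgroup.closure {x | ∃ n ∈ S, ∃ a ∈ (Set.univ : Set A), x = Versch S n fun ν => a ^ ν.1}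

variable {S A}

theorem XSgrp_univ_eq_verschSubgroup (hfin : S.Finite) :
    XSgrp S (Set.univ : Set A) = verschSubgroup S A := by
  have : Finite S := hfin.to_subtype
  let : TopologicalSpace A := ⊥
  have : DiscreteTopology A := ⟨rfl⟩
  exact le_antisymm ((verschSubgroup S A).topologicalClosure_minimal le_rfl (isClosed_discrete _))
    (verschSubgroup S A).le_topologicalClosure

theorem versch_pow_apply (μ : ℕ) (a : A) (ν : S) :
    Versch S μ (fun ν => a ^ ν.1) ν = if μ ∣ ν.1 then (μ : A) * a ^ (ν.1 / μ) else 0 := by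
  unfold Versch
  split_ifs <;> rfl

theorem single_mem_saturation_verschSubgroup (hS : IsTruncationSet S) (hfin : S.Finite) {μ : ℕ}
    (hμ : μ ∈ S) (a : A) :
    Pi.single (⟨μ, hμ⟩ : S) a ∈ (verschSubgroup S A).saturation (primesSubmonoid S) := by
  classical
  have : Finite S := hfin.to_subtype
  set T := (verschSubgroup S A).saturation (primesSubmonoid S)
  refine (hfin.wellFoundedOn (r := (· > ·))).induction (x := μ)
    (P := fun μ => ∀ (hμ : μ ∈ S) (a : A), Pi.single (⟨μ, hμ⟩ : S) a ∈ T) hμ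
    (fun μ hμ IH _ a => ?_) hμ a
  have hμpos : 0 < μ := hS.2.1 μ hμ
  have hV : Versch S μ (fun ν => a ^ ν.1) ∈ T :=
    AddSubgroup.le_saturation (AddSubgroup.subset_closure ⟨μ, hμ, a, trivial, rfl⟩)
  -- supported on the proper multiples of `μ`, which lie above `μ`
  have hR : (μ : ℤ) • Pi.single (⟨μ, hμ⟩ : S) a - Versch S μ (fun ν => a ^ ν.1) ∈ T := by
    refine AddSubgroup.pi_mem_of_single_mem _ fun ν => ?_
    by_cases hν : ν = ⟨μ, hμ⟩
    · subst hν
      simp [versch_pow_apply, Nat.div_self hμpos]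
    by_cases hdvd : μ ∣ ν.1
    · have hlt : μ < ν.1 := lt_of_le_of_ne (Nat.le_of_dvd (hS.2.1 _ ν.2) hdvd)
        fun h => hν (Subtype.ext h.symm)
      exact IH ν.1 ν.2 hlt ν.2 _
    · simp [versch_pow_apply, hν, hdvd]
  refine AddSubgroup.mem_saturation_of_smul_mem (natCast_mem_primesSubmonoid hS hμ) ?_
  simpa using T.add_mem hR hV

theorem saturation_verschSubgroup_eq_top (hS : IsTruncationSet S) (hfin : S.Finite) :
    (verschSubgroup S A).saturation (primesSubmonoid S) = ⊤ := by
  classical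
  have : Finite S := hfin.to_subtype
  refine eq_top_iff.mpr fun x _ => AddSubgroup.pi_mem_of_single_mem x fun ν => ?_
  exact single_mem_saturation_verschSubgroup hS hfin ν.2 _

end Verschiebung

/-- For a finite truncation set `S` and any commutative ring `A`, the
inclusion `X_S(A) ⊆ A^S` induces an isomorphism
`X_S(A) ⊗_ℤ ℚ_S ≅ A^S ⊗_ℤ ℚ_S`. -/
theorem statement2 {A : Type*} [CommRing A] (S : Set ℕ)
    (hS : IsTruncationSet S) (hfin : S.Finite) :
    Function.Bijective
      (LinearMap.rTensor (QS S)
        ((XSgrp S (Set.univ : Set A)).subtype.toIntLinearMap)) := by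
  have hX (x : S → A) : ∃ s ∈ primesSubmonoid S, s • x ∈ XSgrp S Set.univ := by
    rw [← AddSubgroup.mem_saturation, XSgrp_univ_eq_verschSubgroup hfin,
      saturation_verschSubgroup_eq_top hS hfin]
    exact AddSubgroup.mem_top x
  have key := LinearMap.rTensor_subtype_bijective_of_isLocalization (L := QS S) (P := S → A)
    (primesSubmonoid S) (XSgrp S Set.univ).toIntSubmodule hX
  -- the `ℤ`-module structure on `QS S` in the statement is `AddCommGroup.toIntModule`
  rwa [Subsingleton.elim (AddCommGroup.toIntModule (QS S)) Algebra.toModule]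
end

section
/- For every commutative ring A and every truncation set S, the image of the map Ψ_S : A^S → A^S defined by Ψ_S(a)_m = ∑_{n ∈ S, n ∣ m} n·a_n^{m/n} is an additive subgroup of A^S, and this subgroup is contained in X_S(A). -/
open Classical in
/-- `Ψ_S : A^S → A^S`, `Ψ_S(a)_m = ∑_{n ∈ S, n ∣ m} n·a_n^{m/n}`. -/
noncomputable def PsiS (S : Set ℕ) {A : Type*} [CommRing A] (a : S → A) :
    S → A :=
  fun m => ∑ n ∈ ((m : ℕ).divisors.filter (· ∈ S)).attach,
    (n.1 : A) * (a ⟨n.1, (Finset.mem_filter.mp n.2).2⟩) ^ ((m : ℕ) / n.1)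

/-!
Since `S` is closed under divisors, `Ψ_S` is the restriction to `S` of the ghost map
`x ↦ (∑_{d ∣ m} d x_d^{m/d})_m`. By Dwork's lemma, on any ring `B` with Frobenius lifts `φ_p`
a family `w` is a ghost vector as soon as `w (p n) ≡ φ_p (w n) mod p^{v_p(n)+1}` for all primes
`p`: these congruences make every `p`-part of `m`, hence `m`, divide what remains of `w m` after
subtracting the contributions of the proper divisors. Ghost vectors satisfy the congruences, which
are additive in `w`; so over `ℤ[X_n, Y_n]` with `φ_p = expand p` the difference of the ghost
vectors of `X` and `Y` is a ghost vector, and specialising the variables shows that ghost vectors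
over any ring are closed under subtraction.
Finally `Ψ_S(a) = ∑_{n ∈ S} V_n⟨a_n⟩`, the partial sums converging coordinatewise because only
the divisors of `m` contribute to the `m`-th coordinate.
-/

section Divisibility

variable {B : Type*} [CommRing B]

theorem natCast_pow_dvd_natCast {p k d : ℕ} (h : p ^ k ∣ d) : (p : B) ^ k ∣ d := by
  exact_mod_cast Nat.cast_dvd_cast (α := B) h

theorem pow_factorization_succ_dvd_pow_sub_pow {p : ℕ} {a b : B} (h : (p : B) ∣ a - b)
    (k : ℕ) : (p : B) ^ (k.factorization p + 1) ∣ a ^ k - b ^ k := by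
  obtain ⟨u, hu⟩ := Nat.ordProj_dvd k p
  have := (dvd_sub_pow_of_dvd_sub h (k.factorization p)).trans (sub_dvd_pow_sub_pow _ _ u)
  rwa [← pow_mul, ← pow_mul, ← hu] at this

theorem natCast_dvd_of_forall_pow_factorization_dvd {m : ℕ} (hm : m ≠ 0) {z : B}
    (h : ∀ p ∈ m.primeFactors, (p : B) ^ m.factorization p ∣ z) : (m : B) ∣ z := by
  have hprod : (m : B) = ∏ p ∈ m.primeFactors, (p : B) ^ m.factorization p := by
    conv_lhs => rw [← Nat.prod_factorization_pow_eq_self hm]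
    rw [Finsupp.prod, Nat.support_factorization]
    push_cast
    rfl
  rw [hprod]
  refine Finset.prod_dvd_of_coprime (fun p hp q hq hpq => ?_) h
  have hcop := Nat.coprime_pow_primes (m.factorization p) (m.factorization q)
    (Nat.prime_of_mem_primeFactors hp) (Nat.prime_of_mem_primeFactors hq) hpq
  exact_mod_cast hcop.cast (R := B)

end Divisibility

namespace BigWitt

variable {B : Type*} [CommRing B]

def ghost (x : ℕ → B) (m : ℕ) : B :=
  ∑ d ∈ m.divisors, (d : B) * x d ^ (m / d)

theorem ghost_eq_sum_properDivisors_add (x : ℕ → B) {m : ℕ} (hm : m ≠ 0) :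
    ghost x m = ∑ d ∈ m.properDivisors, (d : B) * x d ^ (m / d) + m * x m := by
  rw [ghost, ← Nat.cons_self_properDivisors hm, Finset.sum_cons, Nat.div_self (by omega),
    pow_one, add_comm]

theorem map_ghost {C F : Type*} [CommRing C] [FunLike F B C] [RingHomClass F B C] (f : F)
    (x : ℕ → B) (m : ℕ) : f (ghost x m) = ghost (fun n => f (x n)) m := by
  simp only [ghost, map_sum, map_mul, map_pow, map_natCast]

section Congruence

variable {p : ℕ} (hp : p.Prime) {φ : B →+* B} (hφ : ∀ r, (p : B) ∣ φ r - r ^ p)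
include hp hφ

theorem pow_dvd_ghost_mul_sub_map_ghost (x : ℕ → B) (n : ℕ) :
    (p : B) ^ (n.factorization p + 1) ∣ ghost x (p * n) - φ (ghost x n) := by
  rcases eq_or_ne n 0 with rfl | hn
  · simp [ghost]
  have hpn : p * n ≠ 0 := mul_ne_zero hp.ne_zero hn
  have hsub : n.divisors ⊆ (p * n).divisors := Nat.divisors_subset_of_dvd hpn (dvd_mul_left n p)
  have hsplit : ghost x (p * n) - φ (ghost x n) =
      ∑ d ∈ (p * n).divisors \ n.divisors, (d : B) * x d ^ (p * n / d) +
        ∑ d ∈ n.divisors, (d : B) * ((x d ^ p) ^ (n / d) - φ (x d) ^ (n / d)) := by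
    rw [ghost, ghost, map_sum, ← Finset.sum_sdiff hsub, add_sub_assoc, ← Finset.sum_sub_distrib]
    congr 1
    refine Finset.sum_congr rfl fun d hd => ?_
    rw [Nat.mul_div_assoc p (Nat.dvd_of_mem_divisors hd), pow_mul, map_mul, map_pow,
      map_natCast, mul_sub]
  rw [hsplit]
  refine dvd_add (Finset.dvd_sum fun d hd => ?_) (Finset.dvd_sum fun d hd => ?_)
  · -- a divisor of `p n` that does not divide `n` contains the full power `p ^ v_p(p n)`
    obtain ⟨hdpn, hdn⟩ := Finset.mem_sdiff.mp hd
    have hd : d ∣ p * n := Nat.dvd_of_mem_divisors hdpn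
    have hpe : ¬ p ∣ p * n / d := by
      rintro ⟨e, he⟩
      refine hdn (Nat.mem_divisors.mpr ⟨⟨e, ?_⟩, hn⟩)
      have := Nat.div_mul_cancel hd
      rw [he] at this
      exact Nat.eq_of_mul_eq_mul_left hp.pos (by rw [← this]; ring)
    have hpow : p ^ (n.factorization p + 1) ∣ d * (p * n / d) := by
      rw [Nat.mul_div_cancel' hd, pow_succ']
      exact mul_dvd_mul_left p (Nat.ordProj_dvd n p)
    have hdvd := (Nat.Coprime.pow_left _ ((Nat.Prime.coprime_iff_not_dvd hp).mpr hpe)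
      ).dvd_of_dvd_mul_right hpow
    exact (natCast_pow_dvd_natCast hdvd).mul_right _
  · have hdn : d ∣ n := Nat.dvd_of_mem_divisors hd
    have hfac : n.factorization p = d.factorization p + (n / d).factorization p := by
      conv_lhs => rw [← Nat.mul_div_cancel' hdn]
      rw [Nat.factorization_mul (Nat.ne_of_gt (Nat.pos_of_mem_divisors hd))
        (Nat.div_ne_zero_iff_of_dvd hdn |>.mpr ⟨hn, Nat.ne_of_gt (Nat.pos_of_mem_divisors hd)⟩)]
      rfl
    have hfrob : (p : B) ∣ x d ^ p - φ (x d) := by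
      rw [← dvd_neg, neg_sub]; exact hφ (x d)
    rw [hfac, add_assoc, pow_add]
    exact mul_dvd_mul (natCast_pow_dvd_natCast (Nat.ordProj_dvd d p))
      (pow_factorization_succ_dvd_pow_sub_pow hfrob _)

end Congruence

open Classical in
/-- Solves `ghost c = w` by recursion on `m`; the junk value `0` is taken when `m` does not divide
the remainder. -/
noncomputable def ghostPreimage (w : ℕ → B) (m : ℕ) : B :=
  if h : (m : B) ∣ w m - ∑ d ∈ m.properDivisors.attach, (d : B) * ghostPreimage w d ^ (m / d)
  then h.choose else 0
termination_by m
decreasing_by exact (Nat.mem_properDivisors.mp d.2).2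

theorem ghost_ghostPreimage_of_dvd {w : ℕ → B} {m : ℕ} (hm : m ≠ 0)
    (h : (m : B) ∣ w m - ∑ d ∈ m.properDivisors, (d : B) * ghostPreimage w d ^ (m / d)) :
    ghost (ghostPreimage w) m = w m := by
  rw [← Finset.sum_attach] at h
  rw [ghost_eq_sum_properDivisors_add _ hm, ← Finset.sum_attach]
  conv_lhs => rw [ghostPreimage, dif_pos h, ← h.choose_spec]
  ring

theorem ghost_ghostPreimage {φ : ℕ → B →+* B}
    (hφ : ∀ p : ℕ, p.Prime → ∀ r, (p : B) ∣ φ p r - r ^ p) {w : ℕ → B}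
    (hw : ∀ p : ℕ, p.Prime → ∀ n,
      (p : B) ^ (n.factorization p + 1) ∣ w (p * n) - φ p (w n))
    {m : ℕ} (hm : m ≠ 0) : ghost (ghostPreimage w) m = w m := by
  induction m using Nat.strong_induction_on with
  | _ m IH =>
  refine ghost_ghostPreimage_of_dvd hm (natCast_dvd_of_forall_pow_factorization_dvd hm ?_)
  intro p hpm
  have hp := Nat.prime_of_mem_primeFactors hpm
  obtain ⟨n, rfl⟩ := Nat.dvd_of_mem_primeFactors hpm
  have hn : n ≠ 0 := right_ne_zero_of_mul hm
  set c := ghostPreimage w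
  have hc : ghost c n = w n := IH n (lt_mul_left (Nat.pos_of_ne_zero hn) hp.one_lt) hn
  have hv : (p * n).factorization p = n.factorization p + 1 := by
    rw [Nat.factorization_mul hp.ne_zero hn, Finsupp.add_apply, hp.factorization_self, add_comm]
  have key : w (p * n) - ∑ d ∈ (p * n).properDivisors, (d : B) * c d ^ (p * n / d) =
      (w (p * n) - φ p (w n)) - (ghost c (p * n) - φ p (ghost c n)) +
        (p * n : ℕ) * c (p * n) := by
    rw [hc, ghost_eq_sum_properDivisors_add c hm]
    ring
  rw [key, hv]
  exact dvd_add (dvd_sub (hw p hp n) (pow_dvd_ghost_mul_sub_map_ghost hp (hφ p hp) c n))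
    ((natCast_pow_dvd_natCast (hv ▸ Nat.ordProj_dvd (p * n) p)).mul_right _)

theorem natCast_dvd_expand_sub_pow {σ : Type*} {p : ℕ} (hp : p.Prime) (r : MvPolynomial σ ℤ) :
    (p : MvPolynomial σ ℤ) ∣ MvPolynomial.expand p r - r ^ p := by
  have : Fact p.Prime := ⟨hp⟩
  rw [← MvPolynomial.C_eq_coe_nat, MvPolynomial.C_dvd_iff_zmod, map_sub, sub_eq_zero,
    map_pow, MvPolynomial.map_expand, MvPolynomial.expand_zmod]

theorem exists_ghost_eq_sub (x y : ℕ → B) :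
    ∃ z : ℕ → B, ∀ m ≠ 0, ghost z m = ghost x m - ghost y m := by
  let X : ℕ → MvPolynomial (ℕ ⊕ ℕ) ℤ := fun n => MvPolynomial.X (Sum.inl n)
  let Y : ℕ → MvPolynomial (ℕ ⊕ ℕ) ℤ := fun n => MvPolynomial.X (Sum.inr n)
  let φ : ℕ → MvPolynomial (ℕ ⊕ ℕ) ℤ →+* MvPolynomial (ℕ ⊕ ℕ) ℤ :=
    fun p => (MvPolynomial.expand p).toRingHom
  have hφ : ∀ p : ℕ, p.Prime → ∀ r, (p : MvPolynomial (ℕ ⊕ ℕ) ℤ) ∣ φ p r - r ^ p :=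
    fun p hp => natCast_dvd_expand_sub_pow hp
  have hw : ∀ p : ℕ, p.Prime → ∀ n,
      (p : MvPolynomial (ℕ ⊕ ℕ) ℤ) ^ (n.factorization p + 1) ∣
        (ghost X (p * n) - ghost Y (p * n)) - φ p (ghost X n - ghost Y n) := by
    intro p hp n
    rw [map_sub, sub_sub_sub_comm]
    exact dvd_sub (pow_dvd_ghost_mul_sub_map_ghost hp (hφ p hp) X n)
      (pow_dvd_ghost_mul_sub_map_ghost hp (hφ p hp) Y n)
  let f := MvPolynomial.aeval (R := ℤ) (Sum.elim x y)
  refine ⟨fun n => f (ghostPreimage (fun m => ghost X m - ghost Y m) n), fun m hm => ?_⟩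
  rw [← map_ghost, ghost_ghostPreimage hφ hw hm, map_sub, map_ghost, map_ghost]
  simp [f, X, Y]

end BigWitt

section TruncationSet

variable {A : Type*} [CommRing A] {S : Set ℕ}

theorem PsiS_apply_eq_ghost (hS : IsTruncationSet S) (a : S → A) {x : ℕ → A}
    (hx : ∀ n : S, x n = a n) (m : S) : PsiS S a m = BigWitt.ghost x m := by
  classical
  have hdiv : (m : ℕ).divisors.filter (· ∈ S) = (m : ℕ).divisors :=
    Finset.filter_true_of_mem fun d hd =>
      hS.2.2 m m.2 d (Nat.dvd_of_mem_divisors hd) (Nat.pos_of_mem_divisors hd)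
  rw [PsiS, BigWitt.ghost]
  conv_rhs => rw [← hdiv, ← Finset.sum_attach]
  exact Finset.sum_congr rfl fun d _ => by rw [← hx ⟨d, (Finset.mem_filter.mp d.2).2⟩]

theorem exists_PsiS_eq_sub (hS : IsTruncationSet S) (a b : S → A) :
    ∃ c : S → A, PsiS S c = PsiS S a - PsiS S b := by
  have hext : ∀ a : S → A, ∀ n : S, Function.extend Subtype.val a 0 n = a n :=
    fun a => Subtype.val_injective.extend_apply a 0
  obtain ⟨z, hz⟩ := BigWitt.exists_ghost_eq_sub (Function.extend Subtype.val a 0)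
    (Function.extend Subtype.val b 0)
  refine ⟨fun n => z n, funext fun m => ?_⟩
  rw [Pi.sub_apply, PsiS_apply_eq_ghost hS _ (fun _ => rfl), PsiS_apply_eq_ghost hS a (hext a),
    PsiS_apply_eq_ghost hS b (hext b), hz m (hS.2.1 m m.2).ne']

theorem Versch_pow_apply (n : ℕ) (c : A) (μ : S) :
    Versch S n (fun ν => c ^ ν.1) μ =
      if n ∣ μ then (n : A) * c ^ ((μ : ℕ) / n) else 0 := by
  unfold Versch
  split_ifs <;> rfl

theorem PsiS_mem_XS (hS : IsTruncationSet S) (a : S → A) : PsiS S a ∈ XS S Set.univ := by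
  classical
  let _ : TopologicalSpace A := ⊥
  have : DiscreteTopology A := ⟨rfl⟩
  let x : ℕ → A := Function.extend Subtype.val a 0
  let partialSum : ℕ → S → A := fun N =>
    ∑ n ∈ (Finset.range N).filter (· ∈ S), Versch S n fun ν => x n ^ ν.1
  have hmem : ∀ N, partialSum N ∈ AddSubgroup.closure
      {y | ∃ n ∈ S, ∃ c ∈ (Set.univ : Set A), y = Versch S n fun ν => c ^ ν.1} := fun N =>
    AddSubgroup.sum_mem _ fun n hn =>
      AddSubgroup.subset_closure ⟨n, (Finset.mem_filter.mp hn).2, x n, trivial, rfl⟩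
  have hlim : Filter.Tendsto partialSum Filter.atTop (nhds (PsiS S a)) := by
    rw [tendsto_pi_nhds]
    intro m
    rw [nhds_discrete, Filter.tendsto_pure, Filter.eventually_atTop]
    refine ⟨m + 1, fun N hN => ?_⟩
    have hdiv :
        ((Finset.range N).filter (· ∈ S)).filter (· ∣ (m : ℕ)) = (m : ℕ).divisors := by
      ext d
      simp only [Finset.mem_filter, Finset.mem_range, Nat.mem_divisors]
      constructor
      · rintro ⟨-, hd⟩
        exact ⟨hd, (hS.2.1 m m.2).ne'⟩
      · rintro ⟨hd, hm⟩
        exact ⟨⟨by have := Nat.le_of_dvd (Nat.pos_of_ne_zero hm) hd; omega,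
          hS.2.2 m m.2 d hd (Nat.pos_of_dvd_of_pos hd (Nat.pos_of_ne_zero hm))⟩, hd⟩
    simp only [partialSum, Finset.sum_apply, Versch_pow_apply]
    rw [← Finset.sum_filter, hdiv,
      PsiS_apply_eq_ghost hS a (Subtype.val_injective.extend_apply a 0), BigWitt.ghost]
  exact mem_closure_of_tendsto hlim (Filter.Eventually.of_forall hmem)

end TruncationSet

/-- For every commutative ring `A` and truncation set `S`, the image of
`Ψ_S` is an additive subgroup of `A^S` contained in `X_S(A)`. -/
theorem statement4 {A : Type*} [CommRing A] (S : Set ℕ)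
    (hS : IsTruncationSet S) :
    (∃ G : AddSubgroup (S → A),
      (G : Set (S → A)) = Set.range (PsiS S (A := A))) ∧
    Set.range (PsiS S (A := A)) ⊆ XS S (Set.univ : Set A) := by
  refine ⟨⟨AddSubgroup.ofSub _ (Set.range_nonempty _) ?_, rfl⟩, ?_⟩
  · rintro _ ⟨a, rfl⟩ _ ⟨b, rfl⟩
    obtain ⟨c, hc⟩ := exists_PsiS_eq_sub hS a b
    exact ⟨c, by rw [hc, sub_eq_add_neg]⟩
  · rintro _ ⟨a, rfl⟩
    exact PsiS_mem_XS hS a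
end

section
/- (Dwork's lemma, p-typical form.) Let p be a prime, A a commutative ring, and φ : A → A a ring endomorphism with φ(a) ≡ a^p (mod pA) for all a ∈ A. Then a sequence x : ℕ → A lies in the image of the ghost map 𝕎 A → A^ℕ (i.e. there is a Witt vector y ∈ 𝕎 A with w_n(y) = x_n for all n) if and only if φ(x_n) ≡ x_{n+1} (mod p^{n+1}A) for all n ≥ 0. -/
/-- The `n`-th ghost component of a `p`-typical Witt vector:
`w_n(x) = ∑_{i=0}^{n} p^i x_i^{p^{n-i}}`. -/
noncomputable def ghost (p : ℕ) {A : Type*} [CommRing A] (n : ℕ)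
    (x : WittVector p A) : A :=
  ∑ i ∈ Finset.range (n + 1), (p : A) ^ i * (x.coeff i) ^ (p ^ (n - i))

/-- Auxiliary: partial ghost-like sum with exponents `p^(n+1-i)`. -/
noncomputable def dwS (p : ℕ) {A : Type*} [CommRing A] (c : ℕ → A) (n : ℕ) : A :=
  ∑ i ∈ Finset.range (n + 1), (p : A) ^ i * (c i) ^ (p ^ (n + 1 - i))

/-- Key congruence: `φ` applied to the `n`-th ghost sum of `c` is congruent to
`dwS p c n` modulo `p^(n+1)`. -/
lemma dw_key (p : ℕ) {A : Type*} [CommRing A] (φ : A →+* A)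
    (hφ : ∀ a : A, (p : A) ∣ (φ a - a ^ p)) (c : ℕ → A) (n : ℕ) :
    (p : A) ^ (n + 1) ∣
      φ (∑ i ∈ Finset.range (n + 1), (p : A) ^ i * (c i) ^ (p ^ (n - i)))
        - dwS p c n := by
  rw [map_sum, dwS, ← Finset.sum_sub_distrib]
  refine Finset.dvd_sum fun i hi => ?_
  rw [Finset.mem_range, Nat.lt_succ_iff] at hi
  rw [map_mul, map_pow, map_natCast, map_pow, ← mul_sub]
  have h1 : (p : A) ^ (n - i + 1) ∣ (φ (c i)) ^ p ^ (n - i) - ((c i) ^ p) ^ p ^ (n - i) :=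
    dvd_sub_pow_of_dvd_sub (hφ (c i)) (n - i)
  have h2 : ((c i) ^ p) ^ p ^ (n - i) = (c i) ^ p ^ (n + 1 - i) := by
    rw [← pow_mul]
    congr 1
    rw [← pow_succ']
    congr 1
    omega
  rw [← h2]
  calc (p : A) ^ (n + 1) = (p : A) ^ i * (p : A) ^ (n - i + 1) := by
        rw [← pow_add]; congr 1; omega
    _ ∣ (p : A) ^ i * ((φ (c i)) ^ p ^ (n - i) - ((c i) ^ p) ^ p ^ (n - i)) :=
        mul_dvd_mul_left _ h1

open Classical in
/-- Recursively chosen coefficient sequence for the converse direction. -/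
noncomputable def dwSeq (p : ℕ) {A : Type*} [CommRing A] (x : ℕ → A) : ℕ → A
  | 0 => x 0
  | (n + 1) =>
    if h : ∃ z : A, x (n + 1)
        - ∑ i : Fin (n + 1), (p : A) ^ (i : ℕ) * (dwSeq p x i) ^ (p ^ (n + 1 - (i : ℕ)))
        = (p : A) ^ (n + 1) * z then h.choose else 0

lemma dwSeq_zero (p : ℕ) {A : Type*} [CommRing A] (x : ℕ → A) :
    dwSeq p x 0 = x 0 := by rw [dwSeq]

lemma dwSeq_succ (p : ℕ) {A : Type*} [CommRing A] (x : ℕ → A) (n : ℕ)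
    (hex : ∃ z : A, x (n + 1)
        - ∑ i : Fin (n + 1), (p : A) ^ (i : ℕ) * (dwSeq p x i) ^ (p ^ (n + 1 - (i : ℕ)))
        = (p : A) ^ (n + 1) * z) :
    (p : A) ^ (n + 1) * dwSeq p x (n + 1)
      = x (n + 1)
        - ∑ i : Fin (n + 1), (p : A) ^ (i : ℕ) * (dwSeq p x i) ^ (p ^ (n + 1 - (i : ℕ))) := by
  rw [dwSeq, dif_pos hex]
  exact hex.choose_spec.symm

lemma dwS_fin (p : ℕ) {A : Type*} [CommRing A] (c : ℕ → A) (n : ℕ) :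
    dwS p c n = ∑ i : Fin (n + 1), (p : A) ^ (i : ℕ) * (c i) ^ (p ^ (n + 1 - (i : ℕ))) :=
  (Fin.sum_univ_eq_sum_range (fun i => (p : A) ^ i * (c i) ^ (p ^ (n + 1 - i))) (n + 1)).symm

lemma ghost_succ (p : ℕ) {A : Type*} [CommRing A] (y : WittVector p A) (n : ℕ) :
    ghost p (n + 1) y = dwS p y.coeff n + (p : A) ^ (n + 1) * y.coeff (n + 1) := by
  rw [ghost, Finset.sum_range_succ, Nat.sub_self, pow_zero, pow_one]
  rfl

/-- **Dwork's lemma (p-typical form).**  Let `p` be a prime, `A` a commutative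
ring and `φ : A → A` a ring endomorphism with `φ a ≡ a ^ p (mod pA)` for all
`a`.  A sequence `x : ℕ → A` lies in the image of the ghost map if and only if
`φ (x n) ≡ x (n+1) (mod p^{n+1} A)` for all `n`. -/
theorem statement7 (p : ℕ) [Fact p.Prime] (A : Type*) [CommRing A]
    (φ : A →+* A) (hφ : ∀ a : A, (p : A) ∣ (φ a - a ^ p)) (x : ℕ → A) :
    (∃ y : WittVector p A, ∀ n : ℕ, ghost p n y = x n) ↔
      (∀ n : ℕ, (p : A) ^ (n + 1) ∣ (φ (x n) - x (n + 1))) := by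
  constructor
  · rintro ⟨y, hy⟩ n
    have key := dw_key p φ hφ y.coeff n
    rw [show (∑ i ∈ Finset.range (n + 1), (p : A) ^ i * (y.coeff i) ^ (p ^ (n - i)))
        = ghost p n y from rfl, hy n] at key
    have : φ (x n) - x (n + 1)
        = (φ (x n) - dwS p y.coeff n) - (p : A) ^ (n + 1) * y.coeff (n + 1) := by
      rw [← hy (n + 1), ghost_succ]; ring
    rw [this]
    exact dvd_sub key (Dvd.intro _ rfl)
  · intro hx
    refine ⟨WittVector.mk p (dwSeq p x), ?_⟩
    have hcoeff : (WittVector.mk p (dwSeq p x)).coeff = dwSeq p x := rfl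
    intro n
    induction n with
    | zero =>
      simp [ghost, hcoeff, dwSeq_zero]
    | succ n ih =>
      have hghost : ghost p n (WittVector.mk p (dwSeq p x))
          = ∑ i ∈ Finset.range (n + 1), (p : A) ^ i * (dwSeq p x i) ^ (p ^ (n - i)) := rfl
      have key := dw_key p φ hφ (dwSeq p x) n
      rw [← hghost, ih] at key
      have hdvd : (p : A) ^ (n + 1) ∣ x (n + 1) - dwS p (dwSeq p x) n := by
        have h := dvd_sub (hx n) key
        have heq : φ (x n) - x (n + 1) - (φ (x n) - dwS p (dwSeq p x) n)
            = -(x (n + 1) - dwS p (dwSeq p x) n) := by ring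
        rw [heq] at h
        exact (dvd_neg).mp h
      obtain ⟨z, hz⟩ := hdvd
      have hex : ∃ w : A, x (n + 1)
          - ∑ i : Fin (n + 1), (p : A) ^ (i : ℕ) * (dwSeq p x i) ^ (p ^ (n + 1 - (i : ℕ)))
          = (p : A) ^ (n + 1) * w := ⟨z, by rw [← dwS_fin]; exact hz⟩
      have hcn1 : (p : A) ^ (n + 1) * dwSeq p x (n + 1)
          = x (n + 1) - dwS p (dwSeq p x) n := by
        rw [dwSeq_succ p x n hex, ← dwS_fin]
      rw [ghost_succ, hcoeff, hcn1]
      ring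
end

section
/- Let p be a prime and A a commutative ring on which multiplication by p is injective, equipped with a ring endomorphism φ : A → A satisfying φ(a) ≡ a^p (mod pA) for all a. Then for every Witt vector x ∈ 𝕎 A there exists a unique sequence a : ℕ → A such that w_m(x) = ∑_{n=0}^{m} p^n · φ^{m−n}(a_n) for all m ≥ 0. -/
lemma ghost_dvd_aux (p : ℕ) [Fact p.Prime] {A : Type*} [CommRing A]
    (φ : A →+* A) (hφ : ∀ a : A, (p : A) ∣ (φ a - a ^ p))
    (x : WittVector p A) (m : ℕ) :
    (p : A) ^ (m + 1) ∣ ghost p (m + 1) x - φ (ghost p m x) := by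
  have hφg : φ (ghost p m x)
      = ∑ i ∈ Finset.range (m + 1), (p : A) ^ i * (φ (x.coeff i)) ^ (p ^ (m - i)) := by
    rw [ghost, map_sum]
    refine Finset.sum_congr rfl fun i _ => ?_
    rw [map_mul, map_pow, map_pow, map_natCast]
  have hg : ghost p (m + 1) x
      = (∑ i ∈ Finset.range (m + 1), (p : A) ^ i * (x.coeff i) ^ (p ^ (m + 1 - i)))
        + (p : A) ^ (m + 1) * x.coeff (m + 1) := by
    rw [ghost, Finset.sum_range_succ, Nat.sub_self, pow_zero, pow_one]
  rw [hg, hφg]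
  have : (∑ i ∈ Finset.range (m + 1), (p : A) ^ i * (x.coeff i) ^ (p ^ (m + 1 - i)))
        + (p : A) ^ (m + 1) * x.coeff (m + 1)
        - ∑ i ∈ Finset.range (m + 1), (p : A) ^ i * (φ (x.coeff i)) ^ (p ^ (m - i))
      = (∑ i ∈ Finset.range (m + 1),
          (p : A) ^ i * ((x.coeff i) ^ (p ^ (m + 1 - i)) - (φ (x.coeff i)) ^ (p ^ (m - i))))
        + (p : A) ^ (m + 1) * x.coeff (m + 1) := by
    simp only [mul_sub, Finset.sum_sub_distrib]
    ring
  rw [this]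
  refine dvd_add (Finset.dvd_sum fun i hi => ?_) (Dvd.intro _ rfl)
  rw [Finset.mem_range] at hi
  have hile : i ≤ m := Nat.lt_succ_iff.mp hi
  have h1 : (p : A) ∣ (x.coeff i) ^ p - φ (x.coeff i) := by
    have := hφ (x.coeff i)
    have := (dvd_neg).2 this
    simpa [neg_sub] using this
  have h2 := dvd_sub_pow_of_dvd_sub h1 (m - i)
  have hexp : ((x.coeff i) ^ p) ^ (p ^ (m - i)) = (x.coeff i) ^ (p ^ (m + 1 - i)) := by
    rw [← pow_mul]
    congr 1
    rw [show m + 1 - i = (m - i) + 1 by omega, pow_succ']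
  rw [hexp] at h2
  have : (p : A) ^ (m + 1) = (p : A) ^ i * (p : A) ^ (m - i + 1) := by
    rw [← pow_add]; congr 1; omega
  rw [this]
  exact mul_dvd_mul_left _ h2

/-- Let `p` be a prime and `A` a commutative ring without `p`-torsion, equipped
with a Frobenius lift `φ`.  Then every Witt vector `x ∈ 𝕎 A` admits a unique
sequence `a : ℕ → A` with `w_m(x) = ∑_{n=0}^{m} p^n · φ^{m-n}(a_n)` for all
`m`. -/
theorem statement9 (p : ℕ) [Fact p.Prime] (A : Type*) [CommRing A]
    (htf : ∀ x : A, (p : A) * x = 0 → x = 0)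
    (φ : A →+* A) (hφ : ∀ a : A, (p : A) ∣ (φ a - a ^ p))
    (x : WittVector p A) :
    ∃! a : ℕ → A, ∀ m : ℕ,
      ghost p m x = ∑ n ∈ Finset.range (m + 1), (p : A) ^ n * (⇑φ)^[m - n] (a n) := by
  -- cancellation of p^m
  have hcanc : ∀ (m : ℕ) (u v : A), (p : A) ^ m * u = (p : A) ^ m * v → u = v := by
    intro m
    induction m with
    | zero => intro u v h; simpa using h
    | succ k ih =>
      intro u v h
      apply ih
      have h0 : (p : A) * ((p : A) ^ k * u - (p : A) ^ k * v) = 0 := by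
        rw [mul_sub]
        rw [pow_succ] at h
        linear_combination h
      exact sub_eq_zero.mp (htf _ h0)
  -- construct the sequence
  classical
  let a : ℕ → A := fun m =>
    Nat.rec (ghost p 0 x) (fun k _ => Classical.choose (ghost_dvd_aux p φ hφ x k)) m
  have ha0 : a 0 = ghost p 0 x := rfl
  have haS : ∀ k : ℕ, ghost p (k + 1) x - φ (ghost p k x) = (p : A) ^ (k + 1) * a (k + 1) :=
    fun k => Classical.choose_spec (ghost_dvd_aux p φ hφ x k)
  have key : ∀ m : ℕ,
      ghost p m x = ∑ n ∈ Finset.range (m + 1), (p : A) ^ n * (⇑φ)^[m - n] (a n) := by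
    intro m
    induction m with
    | zero => simp [ha0]
    | succ k ih =>
      rw [Finset.sum_range_succ, Nat.sub_self, Function.iterate_zero_apply]
      have hstep : ∀ n ∈ Finset.range (k + 1),
          (p : A) ^ n * (⇑φ)^[k + 1 - n] (a n) = φ ((p : A) ^ n * (⇑φ)^[k - n] (a n)) := by
        intro n hn
        rw [Finset.mem_range] at hn
        have : k + 1 - n = (k - n) + 1 := by omega
        rw [this, Function.iterate_succ_apply', map_mul, map_pow, map_natCast]
      rw [Finset.sum_congr rfl hstep, ← map_sum, ← ih]
      have := haS k
      linear_combination this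
  refine ⟨a, key, ?_⟩
  intro b hb
  funext n
  induction n using Nat.strong_induction_on with
  | _ n ihn =>
    have h1 := hb n
    have h2 := key n
    rw [Finset.sum_range_succ] at h1 h2
    have hsum : ∑ i ∈ Finset.range n, (p : A) ^ i * (⇑φ)^[n - i] (b i)
        = ∑ i ∈ Finset.range n, (p : A) ^ i * (⇑φ)^[n - i] (a i) := by
      refine Finset.sum_congr rfl fun i hi => ?_
      rw [Finset.mem_range] at hi
      rw [ihn i hi]
    rw [Nat.sub_self, Function.iterate_zero_apply] at h1 h2
    apply hcanc n
    have heq := h1.symm.trans h2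
    rw [hsum] at heq
    linear_combination heq
end

section
/- Let p be a prime and R a commutative ring of characteristic p. Then for every n ≥ 1 one has α(I^n) ⊆ V^n(𝕎 R), i.e. for every x ∈ I^n the Witt vector α(x) lies in the image of the n-th iterate of the Verschiebung V : 𝕎 R → 𝕎 R. Consequently α induces a ring homomorphism ℤR/I^n → W_n R. -/
/-!
The zeroth Witt coordinate of `α x` is `π x`, so `α` maps `I` into `V(𝕎 R)`. In characteristic `p`
one has `Vⁱ x * Vʲ y = Vⁱ⁺ʲ (Fʲ x * Fⁱ y)`, so by induction `α (Iⁿ) ⊆ Vⁿ(𝕎 R)`; since `Vⁿ(𝕎 R)` is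
the kernel of truncation to length `n`, `truncate n ∘ α` factors through `ℤR/Iⁿ`.
-/

noncomputable section

/-- The canonical projection `ℤR → R` from the monoid algebra of the
multiplicative monoid of `R`, sending `[r]` to `r`. -/
def piHom (R : Type*) [CommRing R] : MonoidAlgebra ℤ R →+* R :=
  (MonoidAlgebra.lift ℤ R R (MonoidHom.id R)).toRingHom

/-- `I = ker (ℤR → R)`. -/
def Iideal (R : Type*) [CommRing R] : Ideal (MonoidAlgebra ℤ R) :=
  RingHom.ker (piHom R)

/-- The ring homomorphism `α : ℤR → 𝕎 R` with `α [r] = ⟨r⟩` (Teichmüller). -/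
def alphaHom (p : ℕ) [Fact p.Prime] (R : Type*) [CommRing R] :
    MonoidAlgebra ℤ R →+* WittVector p R :=
  (MonoidAlgebra.lift ℤ (WittVector p R) R (WittVector.teichmuller p)).toRingHom

open WittVector

namespace WittVector

variable {p : ℕ} [Fact p.Prime] {R : Type*} [CommRing R]

theorem ghostComponent_zero_eq_coeff_zero (x : WittVector p R) :
    ghostComponent 0 x = x.coeff 0 := by
  simp [ghostComponent_apply, wittPolynomial_zero]

theorem truncate_iterate_verschiebung (n : ℕ) (y : WittVector p R) :
    truncate n (verschiebung^[n] y) = 0 :=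
  (mem_ker_truncate n _).mpr fun _ hi => iterate_verschiebung_coeff_eq_zero y hi

end WittVector

section Alpha

variable (p : ℕ) [Fact p.Prime] {R : Type*} [CommRing R]

theorem ghostComponent_zero_comp_alphaHom :
    (ghostComponent 0).comp (alphaHom p R) = piHom R :=
  MonoidAlgebra.ringHom_ext' (RingHom.ext_int _ _) <| MonoidHom.ext fun r => by
    simp [alphaHom, piHom]

theorem coeff_zero_alphaHom (x : MonoidAlgebra ℤ R) :
    (alphaHom p R x).coeff 0 = piHom R x := by
  rw [← ghostComponent_zero_eq_coeff_zero, ← ghostComponent_zero_comp_alphaHom p,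
    RingHom.comp_apply]

theorem exists_verschiebung_eq_alphaHom_of_mem {x : MonoidAlgebra ℤ R} (hx : x ∈ Iideal R) :
    ∃ y : WittVector p R, alphaHom p R x = verschiebung y :=
  ⟨_, eq_iterate_verschiebung (n := 1) fun
    | 0, _ => (coeff_zero_alphaHom p x).trans hx⟩

theorem exists_iterate_verschiebung_eq_alphaHom_of_mem_pow [CharP R p] (n : ℕ)
    {x : MonoidAlgebra ℤ R} (hx : x ∈ Iideal R ^ n) :
    ∃ y : WittVector p R, alphaHom p R x = verschiebung^[n] y := by
  induction n generalizing x with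
  | zero => exact ⟨alphaHom p R x, rfl⟩
  | succ m ih =>
    rw [pow_succ] at hx
    refine Submodule.mul_induction_on hx (fun a ha b hb => ?_)
      fun _ _ ⟨y, hy⟩ ⟨z, hz⟩ => ⟨y + z, by rw [map_add, hy, hz, iterate_map_add]⟩
    obtain ⟨y, hy⟩ := ih ha
    obtain ⟨z, hz⟩ := exists_verschiebung_eq_alphaHom_of_mem p hb
    exact ⟨frobenius y * frobenius^[m] z, by
      rw [map_mul, hy, hz]; exact iterate_verschiebung_mul y z m 1⟩

end Alpha

theorem statement10_general (p : ℕ) [Fact p.Prime] (R : Type*) [CommRing R] [CharP R p]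
    (n : ℕ) :
    (∀ x ∈ (Iideal R) ^ n, ∃ y : WittVector p R,
        alphaHom p R x = (⇑(WittVector.verschiebung (p := p) (R := R)))^[n] y) ∧
    (∃ g : (MonoidAlgebra ℤ R ⧸ (Iideal R) ^ n) →+* TruncatedWittVector p n R,
        ∀ x : MonoidAlgebra ℤ R,
          g (Ideal.Quotient.mk ((Iideal R) ^ n) x) =
            WittVector.truncate n (alphaHom p R x)) := by
  have hV (x) (hx : x ∈ Iideal R ^ n) := exists_iterate_verschiebung_eq_alphaHom_of_mem_pow p n hx
  refine ⟨hV,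
    Ideal.Quotient.lift _ ((truncate n).comp (alphaHom p R)) fun x hx => ?_, fun _ => rfl⟩
  obtain ⟨y, hy⟩ := hV x hx
  rw [RingHom.comp_apply, hy, truncate_iterate_verschiebung]

/-- Let `p` be a prime and `R` a commutative ring of characteristic `p`.
For every `n ≥ 1`, `α (I^n) ⊆ V^n (𝕎 R)`, and consequently `α` induces a ring
homomorphism `ℤR/I^n → W_n R`. -/
theorem statement10 (p : ℕ) [Fact p.Prime] (R : Type*) [CommRing R] [CharP R p]
    (n : ℕ) (hn : 1 ≤ n) :
    (∀ x ∈ (Iideal R) ^ n, ∃ y : WittVector p R,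
        alphaHom p R x = (⇑(WittVector.verschiebung (p := p) (R := R)))^[n] y) ∧
    (∃ g : (MonoidAlgebra ℤ R ⧸ (Iideal R) ^ n) →+* TruncatedWittVector p n R,
        ∀ x : MonoidAlgebra ℤ R,
          g (Ideal.Quotient.mk ((Iideal R) ^ n) x) =
            WittVector.truncate n (alphaHom p R x)) :=
  statement10_general p R n
end
end

section
/- Let p be a prime and R a perfect 𝔽_p-algebra, i.e. a commutative ring of characteristic p whose Frobenius endomorphism x ↦ x^p is bijective. Then for every n ≥ 1 the ring homomorphism α_n = truncate_n ∘ α : ℤR → W_n R is surjective with kernel exactly I^n; hence α_n induces a ring isomorphism ℤR/I^n ≅ W_n R, and passing to the limit a topological ring isomorphism lim_n ℤR/I^n ≅ 𝕎 R. -/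
noncomputable section

/-- The inverse limit `lim_n A ⧸ I n` as a subring of the product. -/
def invLimQuot {A : Type*} [CommRing A] (I : ℕ → Ideal A) :
    Subring (∀ n : ℕ, A ⧸ I n) where
  carrier := {x | ∀ (n m : ℕ), n ≤ m → ∀ (hle : I m ≤ I n),
    Ideal.Quotient.factor hle (x m) = x n}
  zero_mem' := by intro n m h hle; simp
  one_mem' := by intro n m h hle; simp
  add_mem' := by
    intro a b ha hb n m h hle
    simp only [Pi.add_apply, map_add, ha n m h hle, hb n m h hle]
  mul_mem' := by
    intro a b ha hb n m h hle
    simp only [Pi.mul_apply, map_mul, ha n m h hle, hb n m h hle]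
  neg_mem' := by
    intro a ha n m h hle
    simp only [Pi.neg_apply, map_neg, ha n m h hle]

/-- Product of discrete topologies. -/
def discPiTop (ι : Type*) (X : ι → Type*) : TopologicalSpace (∀ i, X i) :=
  @Pi.topologicalSpace ι X fun _ => ⊥

/-- The projective limit topology on `lim_n A ⧸ I n` (each quotient discrete). -/
def limTop {A : Type*} [CommRing A] (I : ℕ → Ideal A) :
    TopologicalSpace (invLimQuot I) :=
  TopologicalSpace.induced Subtype.val (discPiTop ℕ fun n => A ⧸ I n)

/-- The natural topology on `𝕎 R` (`R` discrete): the product topology via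
the coefficient map `𝕎 R → R^ℕ`. -/
def wittTop (p : ℕ) (R : Type*) [CommRing R] : TopologicalSpace (WittVector p R) :=
  TopologicalSpace.induced (fun x => x.coeff) (discPiTop ℕ fun _ => R)

/-! The Teichmüller map sends `I = ker π` into `p 𝕎 R` (the kernel of the constant coefficient
over a perfect ring), so `α (Iⁿ) ⊆ pⁿ 𝕎 R = ker truncateₙ`, and surjectivity of `αₙ` is the
Teichmüller expansion `x ≡ ∑_{i ≤ n} ⟨x_i^{p^{-i}}⟩ pⁱ mod p^{n+1}`. For the converse, perfectness
on the side of `ℤR` gives `[aᵖ] + [bᵖ] - [aᵖ + bᵖ] ∈ (p) + I²`, hence `Iⁿ ⊆ (pⁿ) + I^{n+1}`.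
If `αₙ₊₁ (c) = 0`, induction puts `c ∈ Iⁿ`, so `c = b pⁿ + z` with `z ∈ I^{n+1}`; the `n`-th Witt
coefficient of `α (b) pⁿ` is `π(b)^{pⁿ}`, which forces `b ∈ I` and `c ∈ I^{n+1}`. Finally `𝕎 R` is
the inverse limit of the `W_{n+1} R ≅ ℤR/I^{n+1}`, and each Witt coefficient, resp. each
`ℤR/I^{n+1}`-component, depends on finitely many coordinates on the other side. -/

open WittVector

lemma pow_sub_pow_mem_sq {A : Type*} [CommRing A] {I : Ideal A} {n : ℕ} (hn : (n : A) ∈ I)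
    {x y : A} (h : x - y ∈ I) : x ^ n - y ^ n ∈ I ^ 2 := by
  rw [← geom_sum₂_mul, sq]
  refine Ideal.mul_mem_mul ?_ h
  rw [← Ideal.Quotient.eq_zero_iff_mem, map_sum]
  simp only [map_mul, map_pow, Ideal.Quotient.eq.2 h, geom_sum₂_self]
  rw [← map_natCast (Ideal.Quotient.mk I), Ideal.Quotient.eq_zero_iff_mem.2 hn, zero_mul]

lemma WittVector.ext_truncate {p : ℕ} [Fact p.Prime] {R : Type*} [CommRing R]
    {x y : WittVector p R}
    (h : ∀ n, truncate (n + 1) x = truncate (n + 1) y) : x = y :=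
  WittVector.ext fun n => by
    simpa using congrArg (TruncatedWittVector.coeff (Fin.last n)) (h n)

lemma continuous_of_coordinates_factor_through_finset {X Y ι κ : Type*}
    {E : ι → Type*} {D : κ → Type*}
    (g : X → ∀ i, E i) (h : Y → ∀ k, D k) (f : X → Y)
    (hf : ∀ k, ∃ (s : Finset ι) (c : (∀ i : s, E i) → D k),
      ∀ x, h (f x) k = c fun i => g x i) :
    @Continuous X Y (.induced g (discPiTop ι E)) (.induced h (discPiTop κ D)) f := by
  let _ : ∀ i, TopologicalSpace (E i) := fun _ => ⊥
  let _ : ∀ k, TopologicalSpace (D k) := fun _ => ⊥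
  have _ : ∀ i, DiscreteTopology (E i) := fun _ => ⟨rfl⟩
  let _ : TopologicalSpace X := .induced g inferInstance
  refine continuous_induced_rng.2 (continuous_pi fun k => ?_)
  obtain ⟨s, c, hc⟩ := hf k
  change Continuous fun x => h (f x) k
  rw [show (fun x => h (f x) k) = c ∘ fun x (i : s) => g x i from funext hc]
  exact continuous_of_discreteTopology.comp
    (continuous_pi fun i => (continuous_apply (i : ι)).comp continuous_induced_dom)

section

variable {R : Type*} [CommRing R]

local notation "[" r "]ₘ" => MonoidAlgebra.of ℤ _ r

@[simp] lemma piHom_of (r : R) : piHom R [r]ₘ = r := by simp [piHom]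

@[simp] lemma alphaHom_of (p : ℕ) [Fact p.Prime] (r : R) :
    alphaHom p R [r]ₘ = teichmuller p r := by simp [alphaHom]

lemma constantCoeff_comp_alphaHom (p : ℕ) [Fact p.Prime] :
    constantCoeff.comp (alphaHom p R) = piHom R :=
  MonoidAlgebra.ringHom_ext (fun b => by simp [alphaHom, piHom]) fun r => by
    rw [← MonoidAlgebra.of_apply, RingHom.comp_apply, alphaHom_of, piHom_of, constantCoeff_apply,
      teichmuller_coeff_zero]

lemma Iideal_le_of_add_sub_mem {J : Ideal (MonoidAlgebra ℤ R)}
    (h : ∀ r s : R, [r]ₘ + [s]ₘ - [r + s]ₘ ∈ J) : Iideal R ≤ J := by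
  let σ : R →+ MonoidAlgebra ℤ R ⧸ J :=
    AddMonoidHom.mk' (fun r => Ideal.Quotient.mk J [r]ₘ) fun r s => by
      rw [eq_comm, ← sub_eq_zero, ← map_add, ← map_sub, Ideal.Quotient.eq_zero_iff_mem]
      exact h r s
  have hσ : (Ideal.Quotient.mk J : MonoidAlgebra ℤ R →+ _) = σ.comp (piHom R) :=
    MonoidAlgebra.addMonoidHom_ext fun r b => by
      simp only [← MonoidAlgebra.smul_of, AddMonoidHom.coe_comp, AddMonoidHom.coe_coe,
        Function.comp_apply, map_zsmul, piHom_of]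
      rfl
  intro a ha
  rw [← Ideal.Quotient.eq_zero_iff_mem]
  calc Ideal.Quotient.mk J a = σ (piHom R a) := DFunLike.congr_fun hσ a
    _ = 0 := by rw [(ha : piHom R a = 0), map_zero]

lemma natCast_mem_Iideal (p : ℕ) [CharP R p] : (p : MonoidAlgebra ℤ R) ∈ Iideal R := by
  simp [Iideal]

variable (p : ℕ) [hp : Fact p.Prime] [CharP R p] [PerfectRing R p]

lemma Iideal_le_span_sup_sq :
    Iideal R ≤ Ideal.span {(p : MonoidAlgebra ℤ R)} ⊔ Iideal R ^ 2 := by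
  -- With `r = aᵖ`, `s = bᵖ`: `([a] + [b])ᵖ - [a]ᵖ - [b]ᵖ ∈ (p)`, and `([a] + [b])ᵖ ≡ [a + b]ᵖ`
  -- mod `I²` since `[a] + [b] ≡ [a + b]` mod `I` and `p ∈ I`.
  refine Iideal_le_of_add_sub_mem fun r s => ?_
  obtain ⟨a, rfl⟩ := surjective_frobenius R p r
  obtain ⟨b, rfl⟩ := surjective_frobenius R p s
  obtain ⟨t, ht⟩ := exists_add_pow_prime_eq hp.out [a]ₘ [b]ₘ
  have hsum : [a]ₘ + [b]ₘ - [a + b]ₘ ∈ Iideal R := by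
    simp only [Iideal, RingHom.mem_ker, map_sub, map_add, piHom_of, sub_self]
  refine Submodule.mem_sup.2 ⟨-(p * [a]ₘ * [b]ₘ * t),
    Ideal.mem_span_singleton'.2 ⟨-([a]ₘ * [b]ₘ * t), by ring⟩,
    _, pow_sub_pow_mem_sq (natCast_mem_Iideal p) hsum, ?_⟩
  simp only [frobenius_def, ← add_pow_char, map_pow, ht]
  ring

lemma Iideal_pow_le_span_sup (n : ℕ) :
    Iideal R ^ n ≤ Ideal.span {(p : MonoidAlgebra ℤ R) ^ n} ⊔ Iideal R ^ (n + 1) := by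
  induction n with
  | zero => simp
  | succ n ih =>
    have hspan : Ideal.span {(p : MonoidAlgebra ℤ R) ^ n} ≤ Iideal R ^ n :=
      Ideal.span_le.2 <| Set.singleton_subset_iff.2 <|
        Ideal.pow_mem_pow (natCast_mem_Iideal p) n
    calc Iideal R ^ (n + 1) = Iideal R ^ n * Iideal R := pow_succ _ _
      _ ≤ (Ideal.span {(p : MonoidAlgebra ℤ R) ^ n} ⊔ Iideal R ^ (n + 1)) * Iideal R :=
        Ideal.mul_mono_left ih
      _ = Ideal.span {(p : MonoidAlgebra ℤ R) ^ n} * Iideal R ⊔ Iideal R ^ (n + 2) := by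
        rw [Ideal.sup_mul, ← pow_succ]
      _ ≤ Ideal.span {(p : MonoidAlgebra ℤ R) ^ n} *
            (Ideal.span {(p : MonoidAlgebra ℤ R)} ⊔ Iideal R ^ 2) ⊔ Iideal R ^ (n + 2) :=
        sup_le_sup_right (Ideal.mul_mono_right (Iideal_le_span_sup_sq p)) _
      _ = Ideal.span {(p : MonoidAlgebra ℤ R) ^ (n + 1)} ⊔
            Ideal.span {(p : MonoidAlgebra ℤ R) ^ n} * Iideal R ^ 2 ⊔ Iideal R ^ (n + 2) := by
        rw [Ideal.mul_sup, Ideal.span_singleton_mul_span_singleton, ← pow_succ]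
      _ ≤ Ideal.span {(p : MonoidAlgebra ℤ R) ^ (n + 1)} ⊔ Iideal R ^ (n + 2) := by
        refine sup_le (sup_le le_sup_left (le_sup_of_le_right ?_)) le_sup_right
        rw [pow_add]
        exact Ideal.mul_mono_left hspan

lemma WittVector.ker_truncate (n : ℕ) :
    RingHom.ker (truncate (p := p) (R := R) n) = Ideal.span {(p : WittVector p R) ^ n} := by
  ext x
  rw [mem_ker_truncate, mem_span_p_pow_iff_le_coeff_eq_zero]

lemma WittVector.coeff_zero_eq_zero_of_truncate_mul_pow {x : WittVector p R} {n : ℕ}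
    (h : truncate (n + 1) (x * (p : WittVector p R) ^ n) = 0) : x.coeff 0 = 0 := by
  have hn := (mem_ker_truncate _ _).1 h n n.lt_succ_self
  have hcoeff := mul_pow_charP_coeff_succ x (m := 0) (n := n)
  rw [zero_add] at hcoeff
  rw [hcoeff] at hn
  exact (injective_iff_map_eq_zero _).1 (bijective_iterateFrobenius R p n).1 _ hn

lemma Iideal_pow_le_ker (n : ℕ) :
    Iideal R ^ n ≤ RingHom.ker ((truncate n).comp (alphaHom p R)) := by
  rw [← RingHom.comap_ker, ← Ideal.map_le_iff_le_comap, Ideal.map_pow, ker_truncate,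
    ← Ideal.span_singleton_pow, ← ker_constantCoeff]
  refine Ideal.pow_right_mono (Ideal.map_le_iff_le_comap.2 fun a ha => ?_) n
  rw [Ideal.mem_comap, RingHom.mem_ker, ← RingHom.comp_apply, constantCoeff_comp_alphaHom]
  exact ha

lemma mem_Iideal_of_mul_pow_mem_ker {b : MonoidAlgebra ℤ R} {n : ℕ}
    (h : b * (p : MonoidAlgebra ℤ R) ^ n ∈
      RingHom.ker ((truncate (n + 1)).comp (alphaHom p R))) :
    b ∈ Iideal R := by
  rw [RingHom.mem_ker, RingHom.comp_apply, map_mul, map_pow, map_natCast] at h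
  show piHom R b = 0
  rw [← constantCoeff_comp_alphaHom p, RingHom.comp_apply, constantCoeff_apply]
  exact coeff_zero_eq_zero_of_truncate_mul_pow p h

theorem ker_truncate_comp_alphaHom (n : ℕ) :
    RingHom.ker ((truncate n).comp (alphaHom p R)) = Iideal R ^ n := by
  induction n with
  | zero =>
    ext a
    simp only [RingHom.mem_ker, pow_zero, Ideal.one_eq_top, Submodule.mem_top, iff_true]
    exact TruncatedWittVector.ext fun i => i.elim0
  | succ n ih =>
    refine le_antisymm (fun a ha => ?_) (Iideal_pow_le_ker p (n + 1))
    have ha' : a ∈ Iideal R ^ n := by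
      have := congrArg (TruncatedWittVector.truncate n.le_succ) (RingHom.mem_ker.1 ha)
      rwa [RingHom.comp_apply, TruncatedWittVector.truncate_wittVector_truncate, map_zero,
        ← RingHom.comp_apply, ← RingHom.mem_ker, ih] at this
    obtain ⟨y, hy, z, hz, rfl⟩ := Submodule.mem_sup.1 (Iideal_pow_le_span_sup p n ha')
    obtain ⟨b, rfl⟩ := Ideal.mem_span_singleton'.1 hy
    have hb : b ∈ Iideal R := by
      refine mem_Iideal_of_mul_pow_mem_ker p (n := n) ?_
      simpa using sub_mem ha (Iideal_pow_le_ker p (n + 1) hz)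
    refine add_mem ?_ hz
    rw [pow_succ']
    exact Ideal.mul_mem_mul hb (Ideal.pow_mem_pow (natCast_mem_Iideal p) n)

theorem surjective_truncate_comp_alphaHom (n : ℕ) :
    Function.Surjective ((truncate n).comp (alphaHom p R)) := by
  intro z
  obtain ⟨x, rfl⟩ := truncate_surjective p n R z
  obtain _ | n := n
  · exact ⟨0, TruncatedWittVector.ext fun i => i.elim0⟩
  refine ⟨∑ i ∈ Finset.Iic n,
    [((frobeniusEquiv R p).symm ^ i) (x.coeff i)]ₘ * (p : MonoidAlgebra ℤ R) ^ i, ?_⟩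
  rw [RingHom.comp_apply, eq_comm, ← sub_eq_zero, ← map_sub, ← RingHom.mem_ker,
    ker_truncate, Ideal.mem_span_singleton]
  simp only [map_sum, map_mul, map_pow, map_natCast, alphaHom_of]
  exact dvd_sub_sum_teichmuller_iterateFrobeniusEquiv_coeff x n

def quotientPowEquiv (n : ℕ) :
    (MonoidAlgebra ℤ R ⧸ Iideal R ^ n) ≃+* TruncatedWittVector p n R :=
  (Ideal.quotEquivOfEq (ker_truncate_comp_alphaHom p n).symm).trans
    (RingHom.quotientKerEquivOfSurjective (surjective_truncate_comp_alphaHom p n))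

@[simp] lemma quotientPowEquiv_mk (n : ℕ) (a : MonoidAlgebra ℤ R) :
    quotientPowEquiv p n (Ideal.Quotient.mk _ a) = truncate n (alphaHom p R a) :=
  rfl

lemma quotientPowEquiv_factor {m n : ℕ} (h : n ≤ m) (q : MonoidAlgebra ℤ R ⧸ Iideal R ^ m) :
    quotientPowEquiv p n (Ideal.Quotient.factor (Ideal.pow_le_pow_right h) q) =
      TruncatedWittVector.truncate h (quotientPowEquiv p m q) := by
  obtain ⟨a, rfl⟩ := Ideal.Quotient.mk_surjective q
  simp

local notation "𝓛" => invLimQuot fun n : ℕ => Iideal R ^ (n + 1)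

-- `y k` lives in `ℤR/I^{k+1}`; its image in `ℤR/I^k` gives the length-`k` truncation.
def invLimToWitt : 𝓛 →+* WittVector p R :=
  WittVector.lift (fun k => (quotientPowEquiv p k).toRingHom.comp
      ((Ideal.Quotient.factor (Ideal.pow_le_pow_right k.le_succ)).comp
        ((Pi.evalRingHom _ k).comp (invLimQuot _).subtype)))
    fun k₁ k₂ hk => RingHom.ext fun y => by
      have hy := y.2 k₁ k₂ hk (Ideal.pow_le_pow_right (Nat.succ_le_succ hk))
      simp only [RingHom.comp_apply, RingEquiv.toRingHom_eq_coe, RingHom.coe_coe,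
        Pi.evalRingHom_apply, Subring.coe_subtype] at hy ⊢
      rw [← hy, quotientPowEquiv_factor, quotientPowEquiv_factor, quotientPowEquiv_factor,
        TruncatedWittVector.truncate_truncate, TruncatedWittVector.truncate_truncate]
      all_goals omega

lemma truncate_invLimToWitt (y : 𝓛) (n : ℕ) :
    truncate (n + 1) (invLimToWitt p y) = quotientPowEquiv p (n + 1) (y.1 n) := by
  rw [invLimToWitt, truncate_lift]
  simp only [RingHom.comp_apply, RingEquiv.toRingHom_eq_coe, RingHom.coe_coe,
    Pi.evalRingHom_apply, Subring.coe_subtype]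
  rw [y.2 n (n + 1) n.le_succ]

lemma invLimToWitt_injective : Function.Injective (invLimToWitt (R := R) p) := by
  intro y y' h
  refine Subtype.ext (funext fun n => (quotientPowEquiv p (n + 1)).injective ?_)
  rw [← truncate_invLimToWitt, ← truncate_invLimToWitt, h]

lemma invLimToWitt_surjective : Function.Surjective (invLimToWitt (R := R) p) := by
  intro x
  refine ⟨⟨fun n => (quotientPowEquiv p (n + 1)).symm (truncate (n + 1) x),
    fun n m h _ => (quotientPowEquiv p (n + 1)).injective ?_⟩, ?_⟩
  · rw [quotientPowEquiv_factor p (Nat.succ_le_succ h), RingEquiv.apply_symm_apply,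
      RingEquiv.apply_symm_apply, TruncatedWittVector.truncate_wittVector_truncate]
  · exact WittVector.ext_truncate fun n => by
      rw [truncate_invLimToWitt, RingEquiv.apply_symm_apply]

def invLimEquiv : 𝓛 ≃+* WittVector p R :=
  RingEquiv.ofBijective (invLimToWitt p) ⟨invLimToWitt_injective p, invLimToWitt_surjective p⟩

lemma invLimEquiv_symm_apply_coe (x : WittVector p R) (n : ℕ) :
    ((invLimEquiv p).symm x).1 n = (quotientPowEquiv p (n + 1)).symm (truncate (n + 1) x) := by
  rw [RingEquiv.eq_symm_apply, ← truncate_invLimToWitt]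
  exact congrArg _ ((invLimEquiv p).apply_symm_apply x)

lemma invLimEquiv_mk (a : MonoidAlgebra ℤ R) :
    invLimEquiv p ⟨fun n => Ideal.Quotient.mk (Iideal R ^ (n + 1)) a, by intro n m _ _; simp⟩ =
      alphaHom p R a :=
  WittVector.ext_truncate fun n => truncate_invLimToWitt p _ n

lemma continuous_invLimEquiv :
    @Continuous _ _ (limTop fun n => Iideal R ^ (n + 1)) (wittTop p R)
      (invLimEquiv (R := R) p) := by
  refine continuous_of_coordinates_factor_through_finset _ _ _ fun k => ⟨{k},
    fun z => (quotientPowEquiv p (k + 1) (z ⟨k, Finset.mem_singleton_self k⟩)).coeff (Fin.last k),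
    fun y => ?_⟩
  show _ = (quotientPowEquiv p (k + 1) (y.1 k)).coeff (Fin.last k)
  rw [← truncate_invLimToWitt, WittVector.coeff_truncate]
  rfl

lemma continuous_invLimEquiv_symm :
    @Continuous _ _ (wittTop p R) (limTop fun n => Iideal R ^ (n + 1))
      (invLimEquiv (R := R) p).symm := by
  refine continuous_of_coordinates_factor_through_finset _ _ _ fun n => ⟨Finset.range (n + 1),
    fun z => (quotientPowEquiv p (n + 1)).symm
      (TruncatedWittVector.mk p fun i => z ⟨i, Finset.mem_range.2 i.2⟩),
    fun x => ?_⟩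
  rw [invLimEquiv_symm_apply_coe]
  congr 1

end

/-- For a perfect `𝔽_p`-algebra `R`, the map `α_n = truncate_n ∘ α : ℤR → W_n R`
is surjective with kernel `I^n`; hence `ℤR/I^n ≅ W_n R`, and in the limit
there is a topological ring isomorphism `lim_n ℤR/I^n ≅ 𝕎 R`. -/
theorem statement11 (p : ℕ) [Fact p.Prime] (R : Type*) [CommRing R] [CharP R p]
    (hperfect : Function.Bijective fun x : R => x ^ p) :
    (∀ n : ℕ, 1 ≤ n →
      Function.Surjective ((WittVector.truncate n).comp (alphaHom p R)) ∧
      RingHom.ker ((WittVector.truncate n).comp (alphaHom p R)) = (Iideal R) ^ n) ∧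
    (∀ n : ℕ, 1 ≤ n →
      ∃ e : (MonoidAlgebra ℤ R ⧸ (Iideal R) ^ n) ≃+* TruncatedWittVector p n R,
        ∀ a : MonoidAlgebra ℤ R,
          e (Ideal.Quotient.mk ((Iideal R) ^ n) a) =
            WittVector.truncate n (alphaHom p R a)) ∧
    (∃ e : invLimQuot (fun n => (Iideal R) ^ (n + 1)) ≃+* WittVector p R,
      @Continuous _ _ (limTop fun n => (Iideal R) ^ (n + 1)) (wittTop p R) e ∧
      @Continuous _ _ (wittTop p R) (limTop fun n => (Iideal R) ^ (n + 1)) e.symm ∧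
      ∀ a : MonoidAlgebra ℤ R,
        e ⟨fun n => Ideal.Quotient.mk ((Iideal R) ^ (n + 1)) a,
            by intro n m h hle; simp⟩ = alphaHom p R a) := by
  have : PerfectRing R p := ⟨hperfect⟩
  exact ⟨fun n _ => ⟨surjective_truncate_comp_alphaHom p n, ker_truncate_comp_alphaHom p n⟩,
    fun n _ => ⟨quotientPowEquiv p n, quotientPowEquiv_mk p n⟩,
    invLimEquiv p, continuous_invLimEquiv p, continuous_invLimEquiv_symm p,
    invLimEquiv_mk p⟩

end
end

section
/- Let p be a prime, k an algebraic closure of 𝔽_p, and 𝔬 = 𝕎 k the ring of p-typical Witt vectors of k (a complete discrete valuation ring with residue field k containing the valuation ring of the maximal unramified extension of ℚ_p). For all positive integers N and m there exist a finite index set I and elements a_i, b_i ∈ 𝔬 (i ∈ I) such that, in the polynomial ring 𝔬[x], ∑_{i ∈ I} (a_i + b_i x)^l ≡ 0 (mod p^N 𝔬[x]) for every l = 1, …, m−1, and ∑_{i ∈ I} (a_i + b_i x)^m ≡ m·x (mod p^N 𝔬[x]). -/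
/-!
Take `n = 1 + p ^ N * m ^ 2`, which is prime to `p`, and a primitive `n`-th root of unity `ζ` in
`𝕎 k` (the Teichmüller lift of one in `k`). Put `a_i = ζ ^ i` and `b_i = ζ ^ (i * r)` for
`i < n`, where `r = n - (m - 1) ≡ 1 - m (mod n)`. The coefficient of `x ^ j` in
`∑ i, (a_i + b_i x) ^ l` is `n * (l choose j)` if `n ∣ l - m * j` and `0` otherwise; since
`|l - m * j| ≤ m ^ 2 < n` for `j ≤ l ≤ m`, only `l = m, j = 1` survives. Hence the power sums
vanish for `l < m`, and the `m`-th one is `n * m * x ≡ m * x (mod p ^ N)`.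
-/

open Polynomial Finset

theorem Polynomial.coeff_C_add_C_mul_X_pow {R : Type*} [CommSemiring R] (a b : R) (l j : ℕ) :
    ((C a + C b * X) ^ l).coeff j = a ^ (l - j) * b ^ j * l.choose j := by
  simp only [add_comm (C a), add_pow, finsetSum_coeff, mul_pow, ← C_pow, coeff_mul_natCast,
    coeff_mul_C, coeff_C_mul_X_pow]
  rw [Finset.sum_eq_single j (fun k _ hk => by simp [Ne.symm hk])]
  · simp only [if_true]; ring
  · intro hj
    simp [Nat.choose_eq_zero_of_lt (by simpa using hj : l < j)]

theorem Nat.dvd_sub_add_sub_mul_iff {n m l j : ℕ} (hm : 0 < m) (hn : m ^ 2 < n) (hjl : j ≤ l)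
    (hlm : l ≤ m) : n ∣ l - j + (n - (m - 1)) * j ↔ l = m * j := by
  have hmj : m * j ≤ m ^ 2 := by rw [sq]; exact Nat.mul_le_mul_left m (hjl.trans hlm)
  have hm2 : m ≤ m ^ 2 := Nat.le_self_pow two_ne_zero m
  have hcast : ((l - j + (n - (m - 1)) * j : ℕ) : ℤ) = n * j + (l - m * j) := by
    rw [Nat.cast_add, Nat.cast_mul, Nat.cast_sub hjl, Nat.cast_sub (by omega : m - 1 ≤ n),
      Nat.cast_sub hm]
    ring
  rw [← Int.natCast_dvd_natCast, hcast, dvd_add_right (dvd_mul_right _ _)]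
  constructor
  · intro hdvd
    have := Int.eq_zero_of_abs_lt_dvd hdvd (by rw [abs_lt]; constructor <;> omega)
    omega
  · intro h
    simp [h]

section
variable {R : Type*} [CommRing R] [IsDomain R] {ζ : R} {n : ℕ}

theorem IsPrimitiveRoot.sum_range_pow_mul (hζ : IsPrimitiveRoot ζ n) (e : ℕ) :
    ∑ i ∈ range n, ζ ^ (i * e) = if n ∣ e then (n : R) else 0 := by
  simp_rw [mul_comm _ e, pow_mul]
  split_ifs with he
  · simp [(hζ.pow_eq_one_iff_dvd e).mpr he]
  · have hne : ζ ^ e ≠ 1 := mt (hζ.pow_eq_one_iff_dvd e).mp he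
    have : (∑ i ∈ range n, (ζ ^ e) ^ i) * (ζ ^ e - 1) = 0 := by
      rw [geom_sum_mul, ← pow_mul, mul_comm, pow_mul, hζ.pow_eq_one, one_pow, sub_self]
    exact (mul_eq_zero.mp this).resolve_right (sub_ne_zero.mpr hne)

theorem IsPrimitiveRoot.coeff_sum_pow (hζ : IsPrimitiveRoot ζ n) (r l j : ℕ) :
    (∑ i ∈ range n, (C (ζ ^ i) + C (ζ ^ (i * r)) * X) ^ l).coeff j
      = if n ∣ l - j + r * j then (n * l.choose j : R) else 0 := by
  have hterm (i : ℕ) : (ζ ^ i) ^ (l - j) * (ζ ^ (i * r)) ^ j = ζ ^ (i * (l - j + r * j)) := by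
    rw [← pow_mul, ← pow_mul, ← pow_add]; ring_nf
  simp only [finsetSum_coeff, coeff_C_add_C_mul_X_pow, hterm, ← Finset.sum_mul,
    hζ.sum_range_pow_mul, ite_mul, zero_mul]

theorem IsPrimitiveRoot.coeff_sum_pow_of_le {m l : ℕ} (hζ : IsPrimitiveRoot ζ n) (hm : 0 < m)
    (hn : m ^ 2 < n) (hlm : l ≤ m) (j : ℕ) :
    (∑ i ∈ range n, (C (ζ ^ i) + C (ζ ^ (i * (n - (m - 1)))) * X) ^ l).coeff j
      = if l = m * j then (n * l.choose j : R) else 0 := by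
  rw [hζ.coeff_sum_pow]
  rcases le_or_gt j l with hjl | hlj
  · exact if_congr (Nat.dvd_sub_add_sub_mul_iff hm hn hjl hlm) rfl rfl
  · have : l ≠ m * j := by nlinarith
    simp [Nat.choose_eq_zero_of_lt hlj, this]

theorem IsPrimitiveRoot.sum_pow_eq_zero {m l : ℕ} (hζ : IsPrimitiveRoot ζ n) (hn : m ^ 2 < n)
    (hl : 0 < l) (hlm : l < m) :
    ∑ i ∈ range n, (C (ζ ^ i) + C (ζ ^ (i * (n - (m - 1)))) * X) ^ l = 0 := by
  ext j
  have hne : l ≠ m * j := by rcases j with _ | j <;> nlinarith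
  rw [hζ.coeff_sum_pow_of_le (by omega) hn hlm.le, if_neg hne, coeff_zero]

theorem IsPrimitiveRoot.sum_pow_self {m : ℕ} (hζ : IsPrimitiveRoot ζ n) (hm : 0 < m)
    (hn : m ^ 2 < n) :
    ∑ i ∈ range n, (C (ζ ^ i) + C (ζ ^ (i * (n - (m - 1)))) * X) ^ m
      = ((n * m : ℕ) : R[X]) * X := by
  ext j
  rw [hζ.coeff_sum_pow_of_le hm hn le_rfl, coeff_natCast_mul, coeff_X]
  rcases eq_or_ne j 1 with rfl | hj
  · simp
  · simp [hj, Ne.symm hj, hm.ne']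

end

theorem WittVector.teichmuller_injective (p : ℕ) [Fact p.Prime] (R : Type*) [CommRing R] :
    Function.Injective (WittVector.teichmuller p : R →* WittVector p R) := fun a b h => by
  simpa using congrArg (WittVector.coeff · 0) h

/-- **(Zannier's Lemma 1.)**  Let `p` be a prime, `k` an algebraic closure of
`𝔽_p` and `𝔬 = 𝕎 k`.  For all positive integers `N, m` there are a finite
index set `I` and elements `a_i, b_i ∈ 𝔬` such that in `𝔬[x]` one has
`∑_i (a_i + b_i x)^l ≡ 0 (mod p^N)` for `l = 1, …, m-1` and
`∑_i (a_i + b_i x)^m ≡ m·x (mod p^N)`; congruence mod `p^N 𝔬[x]` means that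
all coefficients of the difference are divisible by `p^N` in `𝔬`. -/
theorem statement18 (p : ℕ) [Fact p.Prime] (N m : ℕ) (hN : 0 < N) (hm : 0 < m) :
    ∃ (t : Finset ℕ)
      (a b : ℕ → WittVector p (AlgebraicClosure (ZMod p))),
      (∀ l : ℕ, 1 ≤ l → l ≤ m - 1 → ∀ j : ℕ,
        (p : WittVector p (AlgebraicClosure (ZMod p))) ^ N ∣
          (∑ i ∈ t, (C (a i) + C (b i) * X) ^ l).coeff j) ∧
      (∀ j : ℕ,
        (p : WittVector p (AlgebraicClosure (ZMod p))) ^ N ∣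
          ((∑ i ∈ t, (C (a i) + C (b i) * X) ^ m) -
            (m : Polynomial (WittVector p (AlgebraicClosure (ZMod p)))) * X).coeff j) := by
  set n := 1 + p ^ N * m ^ 2 with hn
  have hmn : m ^ 2 < n := by
    have := Nat.one_le_pow N p (Fact.out : p.Prime).pos
    nlinarith
  have : NeZero (n : ZMod p) := ⟨by simp [n, hN.ne']⟩
  obtain ⟨ζ, hζ⟩ := HasEnoughRootsOfUnity.exists_primitiveRoot (AlgebraicClosure (ZMod p)) n
  obtain ⟨z, hz⟩ : ∃ z : WittVector p (AlgebraicClosure (ZMod p)), IsPrimitiveRoot z n :=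
    ⟨_, hζ.map_of_injective (WittVector.teichmuller_injective p _)⟩
  refine ⟨range n, fun i => z ^ i, fun i => z ^ (i * (n - (m - 1))), fun l hl hlm j => ?_,
    fun j => ?_⟩
  · rw [hz.sum_pow_eq_zero hmn hl (by omega), coeff_zero]
    exact dvd_zero _
  · have hsub : n * m - m = p ^ N * m ^ 3 := by rw [hn]; ring_nf; omega
    rw [hz.sum_pow_self hm hmn, ← sub_mul, ← Nat.cast_sub (Nat.le_mul_of_pos_left m (by omega)),
      hsub, coeff_natCast_mul, Nat.cast_mul, Nat.cast_pow, mul_assoc]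
    exact dvd_mul_right _ _
end
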